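/- arXiv:1701.01051 — 5 statements merged into one kernel-verified Lean document; each statement's English description precedes it below -/
import Mathlib

section
/- Fix a reference orientation O₀ of M. Then for all orientations O, O' of M, O and O' are circuit–cocircuit-reversal equivalent if and only if (O − O')/2 ∈ Λ_A + Λ*_A; moreover, for every γ ∈ ℤ^E there exists an orientation O with (O − O₀)/2 − γ ∈ Λ_A + Λ*_A. Consequently, the map O ↦ class of (O − O₀)/2 induces a bijection from the set of circuit–cocircuit reversal classes of orientations of M onto the Jacobian group Jac(M) = ℤ^E/(Λ_A + Λ*_A); in other words, the circuit–cocircuit reversal system is a torsor under Jac(M). -/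
/-!
Reversing a signed circuit or cocircuit `C` compatible with `O` replaces `O` by `O - 2C`, so
reversal-equivalent orientations differ by twice a vector of `Λ_A + Λ*_A`.

Conversely, write `(O - O')/2 = u + v` with `u ∈ Λ_A`, `v ∈ Λ*_A`; every coordinate of `u + v` is
`0` or `O e`. Over `ℚ`, `ker A` and the row space of `A` are orthogonal complements, and Minty's
painting lemma, applied with the elements painted according to where `u` and `v` agree with `O`,
yields an elementary vector of `ker A` (if `u ≠ 0`) or of the row space (if `v ≠ 0`) with the signs
of `O`, supported where `u` (resp. `v`) agrees with `O`. Total unimodularity (Cramer's rule) makes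
it a multiple of a signed circuit (resp. cocircuit), which is therefore compatible with `O` and
satisfies `C e * u e ≥ 1` on its support. Reversing it strictly decreases `‖u‖² + ‖v‖²`.

For the second part it suffices to shift `γ` by one unit vector `±e_i` at a time: flip `O i` to
the wanted sign, after first reversing a circuit or cocircuit through `i` compatible with `O`
(Minty's lemma) if `O i` already has that sign.
-/

open Matrix

/-- A vector with all entries in `{-1,0,1}`. -/
def SignVec {m : ℕ} (C : Fin m → ℤ) : Prop := ∀ e, C e = -1 ∨ C e = 0 ∨ C e = 1

/-- A signed circuit of `A`: a `{-1,0,1}`-vector in `ker A` with nonempty support that is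
minimal among supports of nonzero kernel vectors. -/
def IsCircuit {r m : ℕ} (A : Matrix (Fin r) (Fin m) ℤ) (C : Fin m → ℤ) : Prop :=
  SignVec C ∧ C ≠ 0 ∧ A.mulVec C = 0 ∧
    ∀ v : Fin m → ℤ, v ≠ 0 → A.mulVec v = 0 →
      {e | v e ≠ 0} ⊆ {e | C e ≠ 0} → {e | v e ≠ 0} = {e | C e ≠ 0}

/-- A signed cocircuit of `A`: a `{-1,0,1}`-vector in the row space of `A` with nonempty
support that is minimal among supports of nonzero row-space vectors. -/
def IsCocircuit {r m : ℕ} (A : Matrix (Fin r) (Fin m) ℤ) (D : Fin m → ℤ) : Prop :=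
  SignVec D ∧ D ≠ 0 ∧ (∃ y : Fin r → ℤ, D = Matrix.vecMul y A) ∧
    ∀ v : Fin m → ℤ, v ≠ 0 → (∃ y : Fin r → ℤ, v = Matrix.vecMul y A) →
      {e | v e ≠ 0} ⊆ {e | D e ≠ 0} → {e | v e ≠ 0} = {e | D e ≠ 0}

/-- An orientation of the matroid: a function `E → {-1,1}`. -/
def IsOrientation {m : ℕ} (O : Fin m → ℤ) : Prop := ∀ e, O e = 1 ∨ O e = -1

/-- One circuit or cocircuit reversal: negate `O` on the support of a signed circuit or
signed cocircuit compatible with `O`. -/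
def CCReversal {r m : ℕ} (A : Matrix (Fin r) (Fin m) ℤ) (O O' : Fin m → ℤ) : Prop :=
  ∃ C : Fin m → ℤ, (IsCircuit A C ∨ IsCocircuit A C) ∧ (∀ e, C e ≠ 0 → O e = C e) ∧
    (∀ e, C e ≠ 0 → O' e = -O e) ∧ (∀ e, C e = 0 → O' e = O e)

/-- Circuit–cocircuit-reversal equivalence: the equivalence relation generated by circuit
reversals and cocircuit reversals. -/
def CCEquiv {r m : ℕ} (A : Matrix (Fin r) (Fin m) ℤ) : (Fin m → ℤ) → (Fin m → ℤ) → Prop :=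
  Relation.EqvGen (CCReversal A)

open Finset

section DotOrthogonal

variable {ι : Type*} [Fintype ι]

def dotOrth (V : Submodule ℚ (ι → ℚ)) : Submodule ℚ (ι → ℚ) :=
  LinearMap.BilinForm.orthogonal (dotProductBilin ℚ ℚ) V

lemma mem_dotOrth {V : Submodule ℚ (ι → ℚ)} {z : ι → ℚ} :
    z ∈ dotOrth V ↔ ∀ x ∈ V, x ⬝ᵥ z = 0 :=
  Iff.rfl

lemma dotProductBilin_nondegenerate :
    LinearMap.BilinForm.Nondegenerate (dotProductBilin ℚ ℚ : LinearMap.BilinForm ℚ (ι → ℚ)) := by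
  classical
  refine ⟨fun x hx => ?_, fun x hx => ?_⟩ <;>
  · funext i
    simpa using hx (Pi.single i 1)

lemma dotOrth_dotOrth (V : Submodule ℚ (ι → ℚ)) : dotOrth (dotOrth V) = V :=
  LinearMap.BilinForm.orthogonal_orthogonal dotProductBilin_nondegenerate
    (fun x y h => by simpa [dotProduct_comm] using h) V

lemma dotOrth_sup (U V : Submodule ℚ (ι → ℚ)) : dotOrth (U ⊔ V) = dotOrth U ⊓ dotOrth V := by
  ext z
  simp only [Submodule.mem_inf, mem_dotOrth, Submodule.mem_sup]
  refine ⟨fun h => ⟨fun x hx => h x ⟨x, hx, 0, V.zero_mem, add_zero x⟩,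
    fun y hy => h y ⟨0, U.zero_mem, y, hy, zero_add y⟩⟩, ?_⟩
  rintro ⟨hU, hV⟩ _ ⟨x, hx, y, hy, rfl⟩
  rw [add_dotProduct, hU x hx, hV y hy, add_zero]

lemma dotOrth_inf (U V : Submodule ℚ (ι → ℚ)) : dotOrth (U ⊓ V) = dotOrth U ⊔ dotOrth V := by
  rw [← dotOrth_dotOrth (dotOrth U ⊔ dotOrth V), dotOrth_sup, dotOrth_dotOrth, dotOrth_dotOrth]

lemma dotOrth_pi_bot (Z : Set ι) :
    dotOrth (Submodule.pi Z fun _ => (⊥ : Submodule ℚ ℚ)) = Submodule.pi Zᶜ fun _ => ⊥ := by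
  classical
  ext z
  simp only [mem_dotOrth, Submodule.mem_pi, Submodule.mem_bot]
  refine ⟨fun h e he => ?_, fun h x hx => Finset.sum_eq_zero fun e _ => ?_⟩
  · simpa using h (Pi.single e 1) fun f hf => Pi.single_eq_of_ne (ne_of_mem_of_not_mem hf he) _
  · by_cases he : e ∈ Z
    · simp [hx e he]
    · simp [h e he]

lemma dotOrth_ker_mulVecLin {κ : Type*} [Fintype κ] (M : Matrix κ ι ℚ) :
    dotOrth (LinearMap.ker M.mulVecLin) = LinearMap.range Mᵀ.mulVecLin := by
  have hle : LinearMap.range Mᵀ.mulVecLin ≤ dotOrth (LinearMap.ker M.mulVecLin) := by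
    rintro _ ⟨y, rfl⟩
    refine mem_dotOrth.2 fun x hx => ?_
    rw [Matrix.mulVecLin_apply, dotProduct_mulVec, vecMul_transpose, show M *ᵥ x = 0 from hx,
      zero_dotProduct]
  refine (Submodule.eq_of_le_of_finrank_le hle ?_).symm
  have h1 := LinearMap.BilinForm.finrank_orthogonal dotProductBilin_nondegenerate
    (LinearMap.ker M.mulVecLin)
  have h2 := LinearMap.finrank_range_add_finrank_ker M.mulVecLin
  have h3 : Module.finrank ℚ (LinearMap.range Mᵀ.mulVecLin) =
      Module.finrank ℚ (LinearMap.range M.mulVecLin) := by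
    simpa [Matrix.rank] using Matrix.rank_transpose M
  rw [dotOrth, h1, h3]
  omega

end DotOrthogonal

section Minty

variable {ι : Type*} [Fintype ι] [DecidableEq ι]

lemma sign_mul_mul_sign_mul {s : ℚ} (hs : s = 1 ∨ s = -1) (x z : ℚ) :
    (s * x) * (s * z) = x * z := by
  rcases hs with rfl | rfl <;> ring

lemma sign_mul_pos_or_of_dotProduct_eq_zero {x z : ι → ℚ} (hxz : x ⬝ᵥ z = 0) {σ : ι → ℚ}
    (hσ : ∀ e, σ e = 1 ∨ σ e = -1) {g j : ι} (hgj : g ≠ j) (hnonneg : ∀ e ≠ j, 0 ≤ x e * z e)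
    (hgx : 0 < σ g * x g) (hgz : 0 < σ g * z g) : 0 < σ j * x j ∨ 0 < σ j * z j := by
  have hsplit := Finset.sum_erase_add univ (fun e => x e * z e) (mem_univ j)
  have hle := Finset.single_le_sum (fun e he => hnonneg e (ne_of_mem_erase he))
    (mem_erase.2 ⟨hgj, mem_univ g⟩)
  have hg := mul_pos hgx hgz
  rw [sign_mul_mul_sign_mul (hσ g)] at hg
  rw [dotProduct] at hxz
  have hj : (σ j * x j) * (σ j * z j) < 0 := by
    rw [sign_mul_mul_sign_mul (hσ j)]
    linarith
  by_contra! h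
  nlinarith [mul_nonneg_of_nonpos_of_nonpos h.1 h.2]

lemma exists_mem_dotOrth_of_forall_eq_zero (V : Submodule ℚ (ι → ℚ)) {Z : Set ι} {g : ι}
    (hg : g ∉ Z) (h : ∀ x ∈ V, (∀ e ∈ Z, x e = 0) → x g = 0) :
    ∃ z ∈ dotOrth V, z g = 1 ∧ ∀ e ∉ Z, e ≠ g → z e = 0 := by
  have hsingle : Pi.single g 1 ∈ dotOrth (V ⊓ Submodule.pi Z fun _ => ⊥) := by
    rintro x ⟨hxV, hxZ⟩
    simpa using h x hxV hxZ
  rw [dotOrth_inf, dotOrth_pi_bot] at hsingle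
  obtain ⟨z, hz, k, hk, hzk⟩ := Submodule.mem_sup.1 hsingle
  have hk' : ∀ e ∉ Z, k e = 0 := hk
  refine ⟨z, hz, ?_, fun e he heg => ?_⟩
  · simpa [hk' g hg] using congrFun hzk g
  · simpa [hk' e he, heg] using congrFun hzk e

variable (V : Submodule ℚ (ι → ℚ)) {σ : ι → ℚ}

lemma minty_painting_of_forall_eq (hσ : ∀ e, σ e = 1 ∨ σ e = -1) {G Z : Finset ι}
    (hGZ : Disjoint G Z) {g : ι} (hg : g ∈ G) (hG : ∀ j ∈ G, j = g) :
    (∃ x ∈ V, (∀ e ∈ Z, x e = 0) ∧ (∀ e ∈ G, 0 ≤ σ e * x e) ∧ 0 < σ g * x g) ∨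
      (∃ z ∈ dotOrth V, (∀ e ∉ G, e ∉ Z → z e = 0) ∧ (∀ e ∈ G, 0 ≤ σ e * z e) ∧
        0 < σ g * z g) := by
  by_cases hx : ∃ x ∈ V, (∀ e ∈ Z, x e = 0) ∧ x g ≠ 0
  · obtain ⟨x, hxV, hxZ, hxg⟩ := hx
    have hpos : 0 < σ g * ((σ g / x g) • x) g := by
      rcases hσ g with h | h <;> simp [h, hxg]
    exact Or.inl ⟨(σ g / x g) • x, V.smul_mem _ hxV, fun e he => by simp [hxZ e he],
      fun e he => hG e he ▸ hpos.le, hpos⟩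
  · push Not at hx
    obtain ⟨z, hz, hzg, hzZ⟩ := exists_mem_dotOrth_of_forall_eq_zero V (Z := ↑Z)
      (disjoint_left.1 hGZ hg) hx
    have hpos : 0 < σ g * (σ g • z) g := by
      rcases hσ g with h | h <;> simp [h, hzg]
    exact Or.inr ⟨σ g • z, (dotOrth V).smul_mem _ hz,
      fun e heG heZ => by simp [hzZ e heZ (fun h => heG (h ▸ hg))],
      fun e he => hG e he ▸ hpos.le, hpos⟩

/-- Minty's painting lemma: the elements of `Z` are deleted (`x` vanishes there) and those outside
`G ∪ Z` are contracted (`z` vanishes there). -/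
lemma minty_painting (hσ : ∀ e, σ e = 1 ∨ σ e = -1) (G : Finset ι) :
    ∀ Z : Finset ι, Disjoint G Z → ∀ g ∈ G,
      (∃ x ∈ V, (∀ e ∈ Z, x e = 0) ∧ (∀ e ∈ G, 0 ≤ σ e * x e) ∧ 0 < σ g * x g) ∨
      (∃ z ∈ dotOrth V, (∀ e ∉ G, e ∉ Z → z e = 0) ∧ (∀ e ∈ G, 0 ≤ σ e * z e) ∧
        0 < σ g * z g) := by
  induction G using Finset.strongInduction with
  | H G IH =>
  intro Z hGZ g hg
  by_cases hj : ∃ j ∈ G, j ≠ g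
  · obtain ⟨j, hjG, hjg⟩ := hj
    have hg' : g ∈ G.erase j := mem_erase.2 ⟨hjg.symm, hg⟩
    have hsub := erase_ssubset hjG
    -- delete `j`, then contract it; if neither settles `g`, the two leftover vectors are
    -- orthogonal, which forces one of them to have the right sign at `j`
    have hGZ' : Disjoint (G.erase j) Z := hGZ.mono_left (erase_subset _ _)
    rcases IH _ hsub (insert j Z) (by simp [disjoint_insert_right, hGZ']) g hg' with
      ⟨x, hxV, hxZ, hxG, hxg⟩ | ⟨z₁, hz₁, hz₁Z, hz₁G, hz₁g⟩
    · refine Or.inl ⟨x, hxV, fun e he => hxZ e (mem_insert_of_mem he), fun e he => ?_, hxg⟩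
      rcases eq_or_ne e j with rfl | hne
      · simp [hxZ e (mem_insert_self _ _)]
      · exact hxG e (mem_erase.2 ⟨hne, he⟩)
    rcases IH _ hsub Z hGZ' g hg' with
      ⟨x₁, hx₁, hx₁Z, hx₁G, hx₁g⟩ | ⟨z, hz, hzZ, hzG, hzg⟩
    · have hnonneg : ∀ e ≠ j, 0 ≤ x₁ e * z₁ e := fun e hej => by
        by_cases heG : e ∈ G
        · rw [← sign_mul_mul_sign_mul (hσ e)]
          exact mul_nonneg (hx₁G e (mem_erase.2 ⟨hej, heG⟩)) (hz₁G e (mem_erase.2 ⟨hej, heG⟩))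
        by_cases heZ : e ∈ Z
        · simp [hx₁Z e heZ]
        · simp [hz₁Z e (fun h => heG (mem_of_mem_erase h)) (by simp [hej, heZ])]
      rcases sign_mul_pos_or_of_dotProduct_eq_zero (hz₁ x₁ hx₁) hσ hjg.symm hnonneg hx₁g hz₁g
        with hpos | hpos
      · refine Or.inl ⟨x₁, hx₁, hx₁Z, fun e he => ?_, hx₁g⟩
        rcases eq_or_ne e j with rfl | hne
        · exact hpos.le
        · exact hx₁G e (mem_erase.2 ⟨hne, he⟩)
      · refine Or.inr ⟨z₁, hz₁, fun e heG heZ => hz₁Z e (fun h => heG (mem_of_mem_erase h))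
          (by simp [heZ, show e ≠ j by rintro rfl; exact heG hjG]), fun e he => ?_, hz₁g⟩
        rcases eq_or_ne e j with rfl | hne
        · exact hpos.le
        · exact hz₁G e (mem_erase.2 ⟨hne, he⟩)
    · refine Or.inr ⟨z, hz, fun e heG heZ => hzZ e (fun h => heG (mem_of_mem_erase h)) heZ,
        fun e he => ?_, hzg⟩
      rcases eq_or_ne e j with rfl | hne
      · simp [hzZ e (by simp) (disjoint_left.1 hGZ he)]
      · exact hzG e (mem_erase.2 ⟨hne, he⟩)
  · push Not at hj
    exact minty_painting_of_forall_eq V hσ hGZ hg hj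

lemma minty (hσ : ∀ e, σ e = 1 ∨ σ e = -1) (G : Finset ι) {g : ι} (hg : g ∈ G) :
    (∃ x ∈ V, (∀ e ∉ G, x e = 0) ∧ (∀ e ∈ G, 0 ≤ σ e * x e) ∧ 0 < σ g * x g) ∨
      (∃ z ∈ dotOrth V, (∀ e ∈ G, 0 ≤ σ e * z e) ∧ 0 < σ g * z g) := by
  rcases minty_painting V hσ G Gᶜ disjoint_compl_right g hg with
    ⟨x, hx, hxZ, hxG, hxg⟩ | ⟨z, hz, -, hzG, hzg⟩
  · exact Or.inl ⟨x, hx, fun e he => hxZ e (mem_compl.2 he), hxG, hxg⟩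
  · exact Or.inr ⟨z, hz, hzG, hzg⟩

end Minty

section Elementary

open Function

variable {ι : Type*} {V : Submodule ℚ (ι → ℚ)}

def IsElementary (V : Submodule ℚ (ι → ℚ)) (z : ι → ℚ) : Prop :=
  z ∈ V ∧ z ≠ 0 ∧ ∀ y ∈ V, y ≠ 0 → support y ⊆ support z → support z ⊆ support y

def ConformsTo (y x : ι → ℚ) : Prop :=
  ∀ e, y e ≠ 0 → 0 < y e * x e

lemma conformsTo_self (x : ι → ℚ) : ConformsTo x x :=
  fun _ he => mul_self_pos.2 he

lemma ConformsTo.support_subset {y x : ι → ℚ} (h : ConformsTo y x) : support y ⊆ support x :=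
  fun e he hx => (h e he).ne' (by rw [hx, mul_zero])

lemma ConformsTo.trans {y' y x : ι → ℚ} (h' : ConformsTo y' y) (h : ConformsTo y x) :
    ConformsTo y' x := by
  intro e he
  have h₁ := h' e he
  have h₂ := h e (h'.support_subset he)
  have h₃ := mul_self_pos.2 (h'.support_subset he)
  nlinarith [mul_pos h₁ h₂]

lemma ConformsTo.sign_mul_pos {z x : ι → ℚ} (h : ConformsTo z x) {s : ℚ} (hs : s = 1 ∨ s = -1)
    {e : ι} (hx : 0 ≤ s * x e) (hz : z e ≠ 0) : 0 < s * z e := by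
  have h₁ := h e hz
  rw [← sign_mul_mul_sign_mul hs] at h₁
  exact pos_of_mul_pos_left h₁ hx

lemma IsElementary.eq_smul_of_support_subset {z y : ι → ℚ} (hz : IsElementary V z) (hy : y ∈ V)
    (hyz : support y ⊆ support z) {e₀ : ι} (he₀ : z e₀ ≠ 0) : y = (y e₀ / z e₀) • z := by
  set q := y - (y e₀ / z e₀) • z
  have hq0 : q e₀ = 0 := by simp [q, div_mul_cancel₀ _ he₀]
  by_contra hne
  have hsub : support q ⊆ support z :=
    (support_sub _ _).trans (Set.union_subset hyz (support_smul_subset_right _ _))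
  exact hz.2.2 q (V.sub_mem hy (V.smul_mem _ hz.1)) (sub_ne_zero.2 hne) hsub he₀ hq0

lemma exists_conformsTo_sub_smul [Fintype ι] {y w : ι → ℚ} (hwy : support w ⊆ support y)
    (hpos : ∃ e, 0 < y e * w e) :
    ∃ t : ℚ, 0 ≤ t ∧ ConformsTo (y - t • w) y ∧ ∃ e, y e ≠ 0 ∧ (y - t • w) e = 0 := by
  classical
  obtain ⟨e₀, he₀, hmin⟩ := exists_min_image (univ.filter fun e => 0 < y e * w e)
    (fun e => y e / w e) (by simpa [Finset.Nonempty] using hpos)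
  have he₀ : 0 < y e₀ * w e₀ := (mem_filter.1 he₀).2
  have hw₀ : w e₀ ≠ 0 := right_ne_zero_of_mul he₀.ne'
  have ht : 0 ≤ y e₀ / w e₀ := by
    rw [← mul_div_mul_right _ _ hw₀]
    exact div_nonneg he₀.le (mul_self_nonneg _)
  refine ⟨y e₀ / w e₀, ht, fun e he => ?_, e₀, left_ne_zero_of_mul he₀.ne', by
    simp [div_mul_cancel₀ _ hw₀]⟩
  have hye : y e ≠ 0 := fun h => he (by simp [h, not_not.1 fun hw => hwy hw h])
  simp only [Pi.sub_apply, Pi.smul_apply, smul_eq_mul] at he ⊢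
  rcases le_or_gt (y e * w e) 0 with hneg | hpos
  · nlinarith [mul_self_pos.2 hye]
  · have hle := hmin e (mem_filter.2 ⟨mem_univ e, hpos⟩)
    have hw : w e ≠ 0 := right_ne_zero_of_mul hpos.ne'
    have : y e₀ / w e₀ * (y e * w e) ≤ y e * y e := by
      calc y e₀ / w e₀ * (y e * w e) ≤ y e / w e * (y e * w e) :=
            mul_le_mul_of_nonneg_right hle hpos.le
        _ = y e * y e := by field_simp
    exact lt_of_le_of_ne (by nlinarith) (mul_ne_zero he hye).symm

lemma exists_conformsTo_ssubset [Fintype ι] {y w : ι → ℚ} (hy : y ∈ V) (hw : w ∈ V) (hw0 : w ≠ 0)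
    (hwy : support w ⊂ support y) {i : ι} (hi : y i ≠ 0) :
    ∃ y' ∈ V, ConformsTo y' y ∧ y' i ≠ 0 ∧ support y' ⊂ support y := by
  wlog hwi : w i * y i ≤ 0 generalizing w
  · exact this (V.neg_mem hw) (neg_ne_zero.2 hw0) (by simpa using hwy) (by simp; linarith)
  have reduce : ∀ w' ∈ V, support w' ⊆ support y → w' i * y i ≤ 0 → (∃ e, 0 < y e * w' e) →
      ∃ y' ∈ V, ConformsTo y' y ∧ y' i ≠ 0 ∧ support y' ⊂ support y := by
    intro w' hw' hw'y hw'i hpos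
    obtain ⟨t, ht, hconf, e, hye, hy'e⟩ := exists_conformsTo_sub_smul hw'y hpos
    refine ⟨y - t • w', V.sub_mem hy (V.smul_mem t hw'), hconf, fun h => ?_,
      hconf.support_subset.ssubset_of_ne fun h' => (by rw [h']; exact hye : e ∈ support _) hy'e⟩
    have : (y i - t * w' i) * y i = 0 := by simpa using congrArg (· * y i) h
    nlinarith [mul_self_pos.2 hi, mul_nonneg ht (neg_nonneg.2 hw'i)]
  by_cases hpos : ∃ e, 0 < y e * w e
  · exact reduce w hw hwy.subset hwi hpos
  push Not at hpos
  obtain ⟨e, he⟩ := Function.ne_iff.1 hw0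
  have hne : y e * w e ≠ 0 := mul_ne_zero (hwy.subset he) he
  by_cases hwi0 : w i = 0
  · exact reduce (-w) (V.neg_mem hw) (by simpa using hwy.subset) (by simp [hwi0])
      ⟨e, by simpa using lt_of_le_of_ne (hpos e) hne⟩
  · refine ⟨-w, V.neg_mem hw, fun e he => ?_, by simpa using hwi0, by simpa using hwy⟩
    have hwe : w e ≠ 0 := by simpa using he
    have h₁ := lt_of_le_of_ne (hpos e) (mul_ne_zero (hwy.subset hwe) hwe)
    simp only [Pi.neg_apply]
    linarith

lemma exists_isElementary_conformsTo [Fintype ι] {x : ι → ℚ} (hx : x ∈ V) {i : ι} (hi : x i ≠ 0) :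
    ∃ z, IsElementary V z ∧ ConformsTo z x ∧ z i ≠ 0 := by
  obtain ⟨_, ⟨y, hy, hyx, hyi, rfl⟩, hmin⟩ := exists_minimal_of_wellFoundedLT
    (fun S : Set ι => ∃ y ∈ V, ConformsTo y x ∧ y i ≠ 0 ∧ support y = S)
    ⟨_, x, hx, conformsTo_self x, hi, rfl⟩
  refine ⟨y, ⟨hy, fun h => hyi (by simp [h]), fun w hw hw0 hwy => ?_⟩, hyx, hyi⟩
  by_contra hyw
  obtain ⟨y', hy', hy'y, hy'i, hss⟩ := exists_conformsTo_ssubset hy hw hw0 ⟨hwy, hyw⟩ hyi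
  exact hss.2 (hmin ⟨y', hy', hy'y.trans hyx, hy'i, rfl⟩ hss.1)

end Elementary

section Compatible

open Function

variable {ι : Type*} [Fintype ι] {V : Submodule ℚ (ι → ℚ)} {ε : ι → ℚ}

lemma exists_sign_mul_pos_of_mem_dotOrth (hε : ∀ e, ε e = 1 ∨ ε e = -1) {u v : ι → ℚ}
    (hu : u ∈ V) (hv : v ∈ dotOrth V) (hu0 : u ≠ 0) (huv : ∀ e, 0 ≤ ε e * (u e + v e)) :
    ∃ g, 0 < ε g * u g := by
  have hsum : ∑ e, u e * (u e + v e) = ∑ e, u e * u e := by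
    simpa [mul_add, Finset.sum_add_distrib, dotProduct] using hv u hu
  obtain ⟨e, he⟩ := Function.ne_iff.1 hu0
  have hpos : ∑ _e : ι, (0 : ℚ) < ∑ e, u e * (u e + v e) := by
    rw [hsum, sum_const_zero]
    exact Finset.sum_pos' (fun e _ => mul_self_nonneg _) ⟨e, mem_univ e, mul_self_pos.2 he⟩
  obtain ⟨g, -, hg⟩ := exists_lt_of_sum_lt hpos
  rw [← sign_mul_mul_sign_mul (hε g)] at hg
  exact ⟨g, pos_of_mul_pos_left hg (huv g)⟩

lemma exists_mem_of_painting [DecidableEq ι] {σ : ι → ℚ} (hσ : ∀ e, σ e = 1 ∨ σ e = -1)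
    {G : Finset ι} {u v : ι → ℚ} (hu : u ∈ V) (hv : v ∈ dotOrth V)
    (hσu : ∀ e, 0 ≤ σ e * u e ∧ (0 < σ e * u e → e ∈ G)) (hσv : ∀ e ∈ G, σ e * v e ≤ 0)
    {g : ι} (hg : 0 < σ g * u g) :
    ∃ x ∈ V, (∀ e ∉ G, x e = 0) ∧ (∀ e ∈ G, 0 ≤ σ e * x e) ∧ x g ≠ 0 ∧ ∀ e, x e * v e = 0 := by
  rcases minty V hσ G ((hσu g).2 hg) with ⟨x, hx, hxG', hxG, hxg⟩ | ⟨z, hz, hzG, hzg⟩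
  · have hnonpos : ∀ e ∈ univ, x e * v e ≤ 0 := fun e _ => by
      by_cases he : e ∈ G
      · rw [← sign_mul_mul_sign_mul (hσ e)]
        exact mul_nonpos_of_nonneg_of_nonpos (hxG e he) (hσv e he)
      · simp [hxG' e he]
    exact ⟨x, hx, hxG', hxG, right_ne_zero_of_mul hxg.ne',
      fun e => (sum_eq_zero_iff_of_nonpos hnonpos).1 (hv x hx) e (mem_univ e)⟩
  · have hnonneg : ∀ e ∈ univ, 0 ≤ u e * z e := fun e _ => by
      rw [← sign_mul_mul_sign_mul (hσ e)]
      rcases (hσu e).1.eq_or_lt with h | h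
      · simp [← h]
      · exact mul_nonneg h.le (hzG e ((hσu e).2 h))
    have hgpos : 0 < u g * z g := by
      rw [← sign_mul_mul_sign_mul (hσ g)]
      exact mul_pos hg hzg
    exact absurd (hz u hu) (Finset.sum_pos' hnonneg ⟨g, mem_univ g, hgpos⟩).ne'

lemma exists_isElementary_sign_of_mem_dotOrth [DecidableEq ι] (hε : ∀ e, ε e = 1 ∨ ε e = -1)
    {u v : ι → ℚ} (hu : u ∈ V) (hv : v ∈ dotOrth V) (hu0 : u ≠ 0)
    (huv : ∀ e, 0 ≤ ε e * (u e + v e)) (hdisj : ∀ e, ε e * u e ≤ 0 ∨ ε e * v e ≤ 0) :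
    ∃ z, IsElementary V z ∧ ∀ e, z e ≠ 0 → 0 < ε e * z e ∧ 0 < ε e * u e := by
  obtain ⟨g, hg⟩ := exists_sign_mul_pos_of_mem_dotOrth hε hu hv hu0 huv
  -- paint the elements where `u` or `v` agrees with `ε`, making `u` nonnegative and `v` nonpositive
  set G := univ.filter fun e => 0 < ε e * u e ∨ 0 < ε e * v e
  set σ : ι → ℚ := fun e => if 0 < ε e * u e then ε e else -ε e
  have hσ : ∀ e, σ e = 1 ∨ σ e = -1 := fun e => by
    dsimp only [σ]
    split_ifs <;> rcases hε e with h | h <;> simp [h]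
  have hσu : ∀ e, 0 ≤ σ e * u e ∧ (0 < σ e * u e → e ∈ G) := fun e => by
    by_cases h : 0 < ε e * u e
    · simp [σ, h, G, h.le]
    · have := huv e
      simp only [σ, h, if_false, neg_mul, neg_pos, neg_nonneg, G, mem_filter, mem_univ, true_and]
      exact ⟨not_lt.1 h, fun h' => Or.inr (by linarith)⟩
  have hσv : ∀ e ∈ G, σ e * v e ≤ 0 := fun e he => by
    by_cases h : 0 < ε e * u e
    · simpa [σ, h, not_le.2 h] using hdisj e
    · simp only [σ, h, if_false, neg_mul, neg_nonpos]
      exact (by simpa [G, h] using he : 0 < ε e * v e).le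
  obtain ⟨x, hx, hxG', hxG, hxg, hxv⟩ := exists_mem_of_painting hσ hu hv hσu hσv (g := g)
    (by simp [σ, hg])
  obtain ⟨z, hz, hzx, -⟩ := exists_isElementary_conformsTo hx hxg
  refine ⟨z, hz, fun e hze => ?_⟩
  have hxe : x e ≠ 0 := hzx.support_subset hze
  have heG : e ∈ G := by_contra fun h => hxe (hxG' e h)
  have hue : 0 < ε e * u e := by
    simpa [G, (mul_eq_zero.1 (hxv e)).resolve_left hxe] using heG
  have hσe : σ e = ε e := if_pos hue
  exact ⟨hzx.sign_mul_pos (hε e) (hσe ▸ hxG e heG) hze, hue⟩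

lemma exists_isElementary_sign_through [DecidableEq ι] (hε : ∀ e, ε e = 1 ∨ ε e = -1) (i : ι) :
    (∃ z, IsElementary V z ∧ z i ≠ 0 ∧ ∀ e, z e ≠ 0 → 0 < ε e * z e) ∨
      (∃ z, IsElementary (dotOrth V) z ∧ z i ≠ 0 ∧ ∀ e, z e ≠ 0 → 0 < ε e * z e) := by
  rcases minty V hε univ (mem_univ i) with ⟨x, hx, -, hxε, hxi⟩ | ⟨x, hx, hxε, hxi⟩
  all_goals
    obtain ⟨z, hz, hzx, hzi⟩ := exists_isElementary_conformsTo hx (right_ne_zero_of_mul hxi.ne')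
  · exact Or.inl ⟨z, hz, hzi, fun e he => hzx.sign_mul_pos (hε e) (hxε e (mem_univ e)) he⟩
  · exact Or.inr ⟨z, hz, hzi, fun e he => hzx.sign_mul_pos (hε e) (hxε e (mem_univ e)) he⟩

end Compatible

universe u

namespace Matrix

lemma exists_det_submatrix_ne_zero {K : Type*} [Field K] {m κ : Type*} [Fintype m] [Fintype κ]
    [DecidableEq κ] (B : Matrix m κ K) (h : LinearIndependent K B.col) :
    ∃ ρ : κ → m, (B.submatrix ρ id).det ≠ 0 := by
  obtain ⟨κ', a, ha, hspan, hli⟩ := exists_linearIndependent' K B.row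
  have htop : Submodule.span K (Set.range B.row) = ⊤ := by
    refine Submodule.eq_top_of_finrank_eq ?_
    rw [← rank_eq_finrank_span_row, ← rank_transpose, Module.finrank_fintype_fun_eq_card]
    exact h.rank_matrix
  have : Finite κ' := Finite.of_injective a ha
  have : Fintype κ' := Fintype.ofFinite κ'
  have hcard : Fintype.card κ' = Fintype.card κ := by
    have := Module.finrank_eq_card_basis (Module.Basis.mk hli (by rw [hspan, htop]))
    rwa [Module.finrank_fintype_fun_eq_card, eq_comm] at this
  let e : κ ≃ κ' := Fintype.equivOfCardEq hcard.symm
  refine ⟨a ∘ e, (isUnit_iff_isUnit_det _).1 (linearIndependent_rows_iff_isUnit.1 ?_) |>.ne_zero⟩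
  exact hli.comp e e.injective

lemma exists_linearIndependent_cols_option {K : Type*} [Field K] {ι' : Type*} {ι : Type u}
    [Fintype ι'] (B : Matrix ι' ι K) (S : Set ι) {e₀ : ι}
    (he₀ : B.col e₀ ∉ Submodule.span K (Set.range fun f : S => B.col f)) :
    ∃ (κ : Type u) (_ : Fintype κ) (g : Option κ → ι), g none = e₀ ∧
      LinearIndependent K (B.submatrix id g).col ∧
      ∀ f ∈ S, B.col f ∈ Submodule.span K (Set.range fun k => B.col (g (some k))) := by
  obtain ⟨κ, a, -, hspan, hli⟩ := exists_linearIndependent' K fun f : S => B.col f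
  have : Finite κ := hli.finite
  refine ⟨κ, Fintype.ofFinite κ, fun o => o.elim e₀ fun k => a k, rfl,
    linearIndependent_option.2 ⟨hli, by rwa [← hspan] at he₀⟩, fun f hf => ?_⟩
  change B.col f ∈ Submodule.span K (Set.range ((fun f : S => B.col f) ∘ a))
  rw [hspan]
  exact Submodule.subset_span ⟨⟨f, hf⟩, rfl⟩

lemma submatrix_val_mulVec {R ι κ : Type*} [CommRing R] [Fintype ι] (M : Matrix κ ι R)
    (p : ι → Prop) [DecidablePred p] (c : Subtype p → R) :
    M.submatrix id Subtype.val *ᵥ c = M *ᵥ fun e => if h : p e then c ⟨e, h⟩ else 0 := by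
  funext i
  simp only [mulVec, dotProduct]
  have hout : ∑ e : {e // ¬p e}, M i e * (if h : p e then c ⟨e, h⟩ else 0) = 0 :=
    Finset.sum_eq_zero fun e _ => by rw [dif_neg e.2, mul_zero]
  rw [← Fintype.sum_subtype_add_sum_subtype p, hout, add_zero]
  exact Finset.sum_congr rfl fun e _ => by rw [dif_pos e.2]; rfl

lemma apply_eq_neg_mul_of_mulVec_eq_zero {K ι ι' κ : Type*} [Field K] [Fintype ι]
    [DecidableEq ι] (B : Matrix ι' ι K) {z : ι → K} (hz : B *ᵥ z = 0) {e₀ : ι} {p : ι → Prop}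
    [DecidablePred p] (hpz : ∀ e, ¬p e → e ≠ e₀ → z e = 0) (hpe₀ : ¬p e₀) {ρ : κ → ι'}
    (hinj : Function.Injective (B.submatrix ρ (Subtype.val : Subtype p → ι)).mulVec)
    {ξ : Subtype p → K} (hξ : B.submatrix ρ Subtype.val *ᵥ ξ = fun k => B (ρ k) e₀)
    (k : Subtype p) :
    z k = -z e₀ * ξ k := by
  have hsplit : z = Pi.single e₀ (z e₀) + fun e => if h : p e then z e else 0 := by
    funext e
    by_cases he : e = e₀
    · subst he; simp [hpe₀]
    · by_cases hp : p e <;> simp [he, hp, hpz]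
  rw [hsplit, mulVec_add, ← submatrix_val_mulVec _ p (fun k => z k), mulVec_single] at hz
  suffices heq : (fun k : Subtype p => z k) = -z e₀ • ξ by simpa using congrFun heq k
  refine hinj (funext fun i => ?_)
  have hrow := congrFun hz (ρ i)
  simp only [Pi.add_apply, Pi.smul_apply, col_apply, MulOpposite.smul_eq_mul_unop,
    MulOpposite.unop_op, Pi.zero_apply] at hrow
  rw [mulVec_smul, Pi.smul_apply, hξ, smul_eq_mul]
  change _ + (B.submatrix ρ Subtype.val *ᵥ _) i = 0 at hrow
  linear_combination hrow

variable {R : Type*} [CommRing R] {m n κ : Type*} [Fintype κ] [DecidableEq κ] {A : Matrix m n R}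

/-- By Cramer's rule, `ξ k` is a ratio of two minors of `A`. -/
lemma IsTotallyUnimodular.exists_sign_of_mulVec_eq_col (hA : A.IsTotallyUnimodular)
    {ρ : κ → m} {g : κ → n} (hM : IsUnit (A.submatrix ρ g).det) {ξ : κ → R} {f : n}
    (hξ : A.submatrix ρ g *ᵥ ξ = fun k => A (ρ k) f) (k : κ) : ∃ s : SignType, ξ k = s := by
  have hTU := (isTotallyUnimodular_iff_fintype A).1 hA
  obtain ⟨t, ht⟩ := hTU κ ρ g
  obtain ⟨s, hs⟩ := hTU κ ρ (Function.update g k f)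
  have hcramer := congrFun (cramer_eq_adjugate_mulVec (A.submatrix ρ g) (A.submatrix ρ g *ᵥ ξ)) k
  rw [mulVec_mulVec, adjugate_mul, smul_mulVec, one_mulVec, cramer_apply, hξ] at hcramer
  have hupdate : (A.submatrix ρ g).updateCol k (fun k => A (ρ k) f) =
      A.submatrix ρ (Function.update g k f) := by
    ext i j
    rcases eq_or_ne j k with rfl | hj <;> simp [*]
  rw [hupdate, ← hs, Pi.smul_apply, smul_eq_mul, ← ht] at hcramer
  have htt : (t : R) * t = 1 := by
    rw [← ht] at hM
    rcases t with _ | _ | _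
    · simpa using isUnit_zero_iff.1 (by simpa using hM)
    all_goals simp
  exact ⟨t * s, by rw [SignType.coe_mul, hcramer, ← mul_assoc, htt, one_mul]⟩

lemma IsTotallyUnimodular.exists_sign_inv_mul_submatrix (hA : A.IsTotallyUnimodular)
    {ρ : κ → m} {g : κ → n} (hM : IsUnit (A.submatrix ρ g).det) (k : κ) (f : n) :
    ∃ s : SignType, ((A.submatrix ρ g)⁻¹ * A.submatrix ρ id) k f = s :=
  hA.exists_sign_of_mulVec_eq_col hM (ξ := (A.submatrix ρ g)⁻¹ *ᵥ fun k => A (ρ k) f)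
    (by rw [mulVec_mulVec, mul_nonsing_inv _ hM, one_mulVec]) k

lemma IsTotallyUnimodular.isUnit_det_submatrix {A : Matrix m n ℤ} (hA : A.IsTotallyUnimodular)
    (ρ : κ → m) (g : κ → n) (h : (A.submatrix ρ g).det ≠ 0) : IsUnit (A.submatrix ρ g).det := by
  obtain ⟨s, hs⟩ := (isTotallyUnimodular_iff_fintype A).1 hA κ ρ g
  rw [← hs] at h ⊢
  rcases s with _ | _ | _
  · simp at h
  all_goals exact Int.isUnit_iff.2 (by simp)

lemma IsTotallyUnimodular.exists_isUnit_det_submatrix [Fintype m] {A : Matrix m n ℤ}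
    (hA : A.IsTotallyUnimodular) {g : κ → n}
    (hg : Function.Injective ((A.map (Int.cast : ℤ → ℚ)).submatrix id g).mulVec) :
    ∃ ρ : κ → m, IsUnit (A.submatrix ρ g).det := by
  obtain ⟨ρ, hρ⟩ := exists_det_submatrix_ne_zero _ (mulVec_injective_iff.1 hg)
  refine ⟨ρ, hA.isUnit_det_submatrix ρ g fun h => hρ ?_⟩
  rw [show ((A.map (Int.cast : ℤ → ℚ)).submatrix id g).submatrix ρ id =
    (Int.castRingHom ℚ).mapMatrix (A.submatrix ρ g) from rfl, ← RingHom.map_det, h, map_zero]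

end Matrix

section Lattices

open Function

variable {r m : ℕ} (A : Matrix (Fin r) (Fin m) ℤ)

def ratKer : Submodule ℚ (Fin m → ℚ) :=
  LinearMap.ker (A.map (Int.cast : ℤ → ℚ)).mulVecLin

def ratRowSpace : Submodule ℚ (Fin m → ℚ) :=
  LinearMap.range (A.map (Int.cast : ℤ → ℚ)).vecMulLinear

lemma dotOrth_ratKer : dotOrth (ratKer A) = ratRowSpace A := by
  rw [ratKer, dotOrth_ker_mulVecLin, mulVecLin_transpose, ratRowSpace]

lemma dotOrth_ratRowSpace : dotOrth (ratRowSpace A) = ratKer A := by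
  rw [← dotOrth_ratKer, dotOrth_dotOrth]

variable {A}

lemma support_intCast_comp {ι : Type*} (u : ι → ℤ) : support (Int.cast ∘ u : ι → ℚ) = support u :=
  support_comp_eq _ Int.cast_eq_zero u

lemma intCast_comp_eq_zero {ι : Type*} {u : ι → ℤ} : (Int.cast ∘ u : ι → ℚ) = 0 ↔ u = 0 := by
  simp [funext_iff]

lemma intCast_comp_mem_ratKer {u : Fin m → ℤ} :
    (Int.cast ∘ u : Fin m → ℚ) ∈ ratKer A ↔ A *ᵥ u = 0 := by
  have h : (A.map (Int.cast : ℤ → ℚ)) *ᵥ (Int.cast ∘ u) = Int.cast ∘ (A *ᵥ u) :=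
    funext fun i => (RingHom.map_mulVec (Int.castRingHom ℚ) A u i).symm
  rw [ratKer, LinearMap.mem_ker, mulVecLin_apply, h, intCast_comp_eq_zero]

lemma intCast_comp_vecMul (y : Fin r → ℤ) :
    (Int.cast ∘ (y ᵥ* A) : Fin m → ℚ) = (Int.cast ∘ y) ᵥ* A.map (Int.cast : ℤ → ℚ) :=
  funext fun e => RingHom.map_vecMul (Int.castRingHom ℚ) A y e

lemma intCast_comp_vecMul_mem_ratRowSpace (y : Fin r → ℤ) :
    (Int.cast ∘ (y ᵥ* A) : Fin m → ℚ) ∈ ratRowSpace A :=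
  ⟨Int.cast ∘ y, (intCast_comp_vecMul y).symm⟩

lemma support_eq_of_intCast_comp_eq_smul {C : Fin m → ℤ} {z : Fin m → ℚ} {c : ℚ} (hc : c ≠ 0)
    (hCz : Int.cast ∘ C = c • z) : support C = support z := by
  rw [← support_intCast_comp, hCz, support_const_smul_of_ne_zero c z hc]

lemma isCircuit_of_isElementary {C : Fin m → ℤ} (hC : SignVec C) {z : Fin m → ℚ}
    (hz : IsElementary (ratKer A) z) {c : ℚ} (hc : c ≠ 0) (hCz : Int.cast ∘ C = c • z) :
    IsCircuit A C := by
  have hsupp := support_eq_of_intCast_comp_eq_smul hc hCz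
  refine ⟨hC, fun h => hz.2.1 ?_, intCast_comp_mem_ratKer.1 (hCz ▸ (ratKer A).smul_mem c hz.1),
    fun v hv0 hv hvC => hvC.antisymm ?_⟩
  · simpa [h, hc] using hCz.symm
  · have := hz.2.2 _ (intCast_comp_mem_ratKer.2 hv)
      (mt intCast_comp_eq_zero.1 hv0) (by rw [support_intCast_comp, ← hsupp]; exact hvC)
    rwa [support_intCast_comp, ← hsupp] at this

lemma isCocircuit_of_isElementary {C : Fin m → ℤ} (hC : SignVec C)
    (hCA : ∃ y : Fin r → ℤ, C = y ᵥ* A) {z : Fin m → ℚ} (hz : IsElementary (ratRowSpace A) z)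
    {c : ℚ} (hc : c ≠ 0) (hCz : Int.cast ∘ C = c • z) : IsCocircuit A C := by
  have hsupp := support_eq_of_intCast_comp_eq_smul hc hCz
  refine ⟨hC, fun h => hz.2.1 ?_, hCA, fun v hv0 ⟨y, hy⟩ hvC => hvC.antisymm ?_⟩
  · simpa [h, hc] using hCz.symm
  · have := hz.2.2 _ (hy ▸ intCast_comp_vecMul_mem_ratRowSpace y)
      (mt intCast_comp_eq_zero.1 hv0) (by rw [support_intCast_comp, ← hsupp]; exact hvC)
    rwa [support_intCast_comp, ← hsupp] at this

end Lattices

section Fundamental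

open Function

variable {r m : ℕ} {A : Matrix (Fin r) (Fin m) ℤ}

lemma IsElementary.submatrix_mulVec_injective {κ : Type*} [Fintype κ] {M : Matrix κ (Fin m) ℚ}
    {z : Fin m → ℚ} (hz : IsElementary (LinearMap.ker M.mulVecLin) z) {e₀ : Fin m}
    (he₀ : z e₀ ≠ 0) :
    Injective (M.submatrix id (Subtype.val : {e // z e ≠ 0 ∧ e ≠ e₀} → Fin m)).mulVec := by
  classical
  intro c c' hcc'
  rw [← sub_eq_zero]
  by_contra hd0
  set w : Fin m → ℚ := fun e => if h : z e ≠ 0 ∧ e ≠ e₀ then (c - c') ⟨e, h⟩ else 0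
  have hw : w ∈ LinearMap.ker M.mulVecLin := by
    rw [LinearMap.mem_ker, mulVecLin_apply, ← submatrix_val_mulVec, mulVec_sub, hcc', sub_self]
  have hw0 : w ≠ 0 := by
    obtain ⟨k, hk⟩ := ne_iff.1 hd0
    exact fun h => hk (by simpa [w, k.2] using congrFun h k)
  have hwz : support w ⊆ support z := fun e he => by
    by_contra hze
    exact he (dif_neg fun h => h.1 (not_not.1 hze))
  exact hz.2.2 w hw hw0 hwz he₀ (by simp [w])

lemma exists_signVec_smul_of_isElementary_ratKer (hA : A.IsTotallyUnimodular) {z : Fin m → ℚ}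
    (hz : IsElementary (ratKer A) z) :
    ∃ C : Fin m → ℤ, SignVec C ∧ ∃ c : ℚ, c ≠ 0 ∧ Int.cast ∘ C = c • z := by
  classical
  obtain ⟨e₀, he₀⟩ : ∃ e₀, z e₀ ≠ 0 := ne_iff.1 hz.2.1
  set p : Fin m → Prop := fun e => z e ≠ 0 ∧ e ≠ e₀
  obtain ⟨ρ, hρ⟩ := hA.exists_isUnit_det_submatrix (hz.submatrix_mulVec_injective he₀)
  set M := A.submatrix ρ (Subtype.val : Subtype p → Fin m)
  set ξ := M⁻¹ *ᵥ fun k => A (ρ k) e₀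
  have hξ : M *ᵥ ξ = fun k => A (ρ k) e₀ := by
    rw [mulVec_mulVec, mul_nonsing_inv _ hρ, one_mulVec]
  have hMℚ : (A.map (Int.cast : ℤ → ℚ)).submatrix ρ (Subtype.val : Subtype p → Fin m) =
      (Int.castRingHom ℚ).mapMatrix M := rfl
  have hzξ := (A.map (Int.cast : ℤ → ℚ)).apply_eq_neg_mul_of_mulVec_eq_zero hz.1
    (e₀ := e₀) (p := p) (fun e hp he => by_contra fun h => hp ⟨h, he⟩) (by simp [p])
    (mulVec_injective_iff_isUnit.2 ((isUnit_iff_isUnit_det _).2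
      (by rw [hMℚ, ← RingHom.map_det]; exact hρ.map _)))
    (ξ := Int.cast ∘ ξ) (funext fun k => by
      simpa [hMℚ, hξ] using (RingHom.map_mulVec (Int.castRingHom ℚ) M ξ k).symm)
  -- `ξ` expresses column `e₀` in the independent columns on `p`, so `e₀ - ξ` is a kernel vector
  refine ⟨Pi.single e₀ 1 - fun e => if h : p e then ξ ⟨e, h⟩ else 0, fun e => ?_, (z e₀)⁻¹,
    inv_ne_zero he₀, funext fun e => ?_⟩
  · by_cases he : e = e₀
    · subst he; simp [p]
    by_cases hp : p e
    · obtain ⟨s, hs⟩ := hA.exists_sign_of_mulVec_eq_col hρ hξ ⟨e, hp⟩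
      rcases s with _ | _ | _ <;> simp_all
    · simp [he, hp]
  · by_cases he : e = e₀
    · subst he; simp [p, he₀]
    by_cases hp : p e
    · simp [he, hp, hzξ ⟨e, hp⟩, he₀]
    · have hze : z e = 0 := by simpa [p, he] using hp
      simp [he, hp, hze]

lemma exists_signVec_smul_of_isElementary_ratRowSpace (hA : A.IsTotallyUnimodular)
    {z : Fin m → ℚ} (hz : IsElementary (ratRowSpace A) z) :
    ∃ C : Fin m → ℤ, SignVec C ∧ (∃ y : Fin r → ℤ, C = y ᵥ* A) ∧
      ∃ c : ℚ, c ≠ 0 ∧ Int.cast ∘ C = c • z := by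
  classical
  obtain ⟨e₀, he₀⟩ : ∃ e₀, z e₀ ≠ 0 := ne_iff.1 hz.2.1
  obtain ⟨y₀, hy₀⟩ := hz.1
  set B := A.map (Int.cast : ℤ → ℚ)
  have hcol : ∀ f, dotProductBilin ℚ ℚ y₀ (B.col f) = z f := fun f => by rw [← hy₀]; rfl
  obtain ⟨κ, _, g, hg₀, hli, hspan⟩ := B.exists_linearIndependent_cols_option {f | z f = 0}
    (e₀ := e₀) fun h => he₀ <| by
      simpa [hcol] using (Submodule.span_le (p := LinearMap.ker (dotProductBilin ℚ ℚ y₀))).2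
        (by rintro _ ⟨f, rfl⟩; exact LinearMap.mem_ker.2 ((hcol f).trans f.2)) h
  obtain ⟨ρ, hρ⟩ := hA.exists_isUnit_det_submatrix (mulVec_injective_iff.2 hli)
  set M := A.submatrix ρ g
  -- the row combination of `A` that is `1` on column `e₀` and `0` on the columns `g (some k)`
  set C := (M⁻¹ * A.submatrix ρ id) none
  have hCg : ∀ o, C (g o) = (1 : Matrix (Option κ) (Option κ) ℤ) none o := fun o => by
    change (M⁻¹ * M) none o = _
    rw [nonsing_inv_mul _ hρ]
  set Y := M⁻¹ none ᵥ* (1 : Matrix (Fin r) (Fin r) ℤ).submatrix ρ (Equiv.refl _)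
  have hCA : C = Y ᵥ* A := by
    rw [vecMul_vecMul, one_submatrix_mul]
    rfl
  have hsign : SignVec C := fun f => by
    obtain ⟨s, hs⟩ := hA.exists_sign_inv_mul_submatrix hρ none f
    rw [show C f = s from hs]
    rcases s with _ | _ | _ <;> simp
  -- `C` vanishes on the columns spanned by the `g (some k)`, hence off the support of `z`
  have hsupp : support (Int.cast ∘ C : Fin m → ℚ) ⊆ support z := fun f hf => by
    by_contra hzf
    set ψ := dotProductBilin ℚ ℚ (Int.cast ∘ Y : Fin r → ℚ)
    have hψ : ∀ e, ψ (B.col e) = C e := fun e => by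
      rw [hCA, ← comp_apply (f := Int.cast), intCast_comp_vecMul]
      rfl
    have := (Submodule.span_le (p := LinearMap.ker ψ)).2
      (by rintro _ ⟨k, rfl⟩; simp [hψ, hCg]) (hspan f (not_not.1 hzf))
    exact hf (by simpa [hψ] using this)
  have hCmem : (Int.cast ∘ C : Fin m → ℚ) ∈ ratRowSpace A :=
    hCA ▸ intCast_comp_vecMul_mem_ratRowSpace _
  refine ⟨C, hsign, ⟨_, hCA⟩, 1 / z e₀, one_div_ne_zero he₀, ?_⟩
  rw [hz.eq_smul_of_support_subset hCmem hsupp he₀]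
  simp [← hg₀, hCg]

end Fundamental

section Reversal

open Function

variable {r m : ℕ} {A : Matrix (Fin r) (Fin m) ℤ}

lemma SignVec.neg {C : Fin m → ℤ} (h : SignVec C) : SignVec (-C) := fun e => by
  rcases h e with h | h | h <;> simp [h]

lemma IsOrientation.intCast {O : Fin m → ℤ} (hO : IsOrientation O) :
    ∀ e, (Int.cast ∘ O : Fin m → ℚ) e = 1 ∨ (Int.cast ∘ O : Fin m → ℚ) e = -1 := fun e => by
  rcases hO e with h | h <;> simp [h]

lemma exists_pos_smul_of_exists_smul {P : (Fin m → ℤ) → Prop} (hP : ∀ C, P C → P (-C))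
    {z : Fin m → ℚ} (h : ∃ C, P C ∧ ∃ c : ℚ, c ≠ 0 ∧ Int.cast ∘ C = c • z) :
    ∃ C, P C ∧ ∃ c : ℚ, 0 < c ∧ Int.cast ∘ C = c • z := by
  obtain ⟨C, hC, c, hc, hCz⟩ := h
  rcases hc.lt_or_gt with hc | hc
  · refine ⟨-C, hP C hC, -c, neg_pos.2 hc, ?_⟩
    rw [neg_smul, ← hCz]
    funext e
    simp
  · exact ⟨C, hC, c, hc, hCz⟩

lemma eq_of_intCast_comp_eq_smul {C O : Fin m → ℤ} (hC : SignVec C) (hO : IsOrientation O)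
    {z : Fin m → ℚ} {c : ℚ} (hc : 0 < c) (hCz : Int.cast ∘ C = c • z)
    (hzO : ∀ e, z e ≠ 0 → 0 < (O e : ℚ) * z e) {e : Fin m} (he : C e ≠ 0) : O e = C e := by
  have hze : z e ≠ 0 := by
    rw [← mem_support, ← support_eq_of_intCast_comp_eq_smul hc.ne' hCz]
    exact he
  have hpos : (0 : ℚ) < O e * C e := by
    rw [show (C e : ℚ) = c * z e from congrFun hCz e, mul_left_comm]
    exact mul_pos hc (hzO e hze)
  have hpos' : 0 < O e * C e := by exact_mod_cast hpos
  rcases hO e with h | h <;> rcases hC e with h' | h' | h' <;> simp only [h, h'] at hpos' ⊢ <;>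
    omega

lemma exists_isCircuit_of_isElementary {O : Fin m → ℤ} (hA : A.IsTotallyUnimodular)
    (hO : IsOrientation O) {z : Fin m → ℚ} (hz : IsElementary (ratKer A) z)
    (hzO : ∀ e, z e ≠ 0 → 0 < (O e : ℚ) * z e) :
    ∃ C, IsCircuit A C ∧ support C = support z ∧ ∀ e, C e ≠ 0 → O e = C e := by
  obtain ⟨C, hC, c, hc, hCz⟩ := exists_pos_smul_of_exists_smul (P := SignVec) (fun _ => SignVec.neg)
    (exists_signVec_smul_of_isElementary_ratKer hA hz)
  exact ⟨C, isCircuit_of_isElementary hC hz hc.ne' hCz,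
    support_eq_of_intCast_comp_eq_smul hc.ne' hCz,
    fun _ => eq_of_intCast_comp_eq_smul hC hO hc hCz hzO⟩

lemma exists_isCocircuit_of_isElementary {O : Fin m → ℤ} (hA : A.IsTotallyUnimodular)
    (hO : IsOrientation O) {z : Fin m → ℚ} (hz : IsElementary (ratRowSpace A) z)
    (hzO : ∀ e, z e ≠ 0 → 0 < (O e : ℚ) * z e) :
    ∃ C, IsCocircuit A C ∧ support C = support z ∧ ∀ e, C e ≠ 0 → O e = C e := by
  obtain ⟨C, ⟨hC, hCA⟩, c, hc, hCz⟩ := exists_pos_smul_of_exists_smul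
    (P := fun C => SignVec C ∧ ∃ y : Fin r → ℤ, C = y ᵥ* A)
    (fun C ⟨hC, y, hy⟩ => ⟨hC.neg, -y, by rw [hy, neg_vecMul]⟩)
    (by obtain ⟨C, hC, hCA, hCz⟩ := exists_signVec_smul_of_isElementary_ratRowSpace hA hz
        exact ⟨C, ⟨hC, hCA⟩, hCz⟩)
  exact ⟨C, isCocircuit_of_isElementary hC hCA hz hc.ne' hCz,
    support_eq_of_intCast_comp_eq_smul hc.ne' hCz,
    fun _ => eq_of_intCast_comp_eq_smul hC hO hc hCz hzO⟩

end Reversal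

section JacobianTorsor

open Function

variable {r m : ℕ} {A : Matrix (Fin r) (Fin m) ℤ}

/-- `(O - O') / 2 ∈ Λ_A + Λ*_A`. -/
def JacEquiv (A : Matrix (Fin r) (Fin m) ℤ) (O O' : Fin m → ℤ) : Prop :=
  ∃ u v : Fin m → ℤ, A *ᵥ u = 0 ∧ (∃ y : Fin r → ℤ, v = y ᵥ* A) ∧
    ∀ e, O e - O' e = 2 * (u e + v e)

lemma jacEquiv_equivalence : Equivalence (JacEquiv A) where
  refl _ := ⟨0, 0, mulVec_zero A, ⟨0, (zero_vecMul A).symm⟩, fun e => by simp⟩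
  symm := fun ⟨u, v, hu, ⟨y, hy⟩, h⟩ => ⟨-u, -v, by rw [mulVec_neg, hu, neg_zero],
    ⟨-y, by rw [hy, neg_vecMul]⟩, fun e => by simp only [Pi.neg_apply]; linarith [h e]⟩
  trans := fun ⟨u, v, hu, ⟨y, hy⟩, h⟩ ⟨u', v', hu', ⟨y', hy'⟩, h'⟩ =>
    ⟨u + u', v + v', by rw [mulVec_add, hu, hu', add_zero], ⟨y + y', by rw [hy, hy', add_vecMul]⟩,
      fun e => by simp only [Pi.add_apply]; linarith [h e, h' e]⟩

lemma JacEquiv.sub_right {O O' w : Fin m → ℤ} (h : JacEquiv A O O') :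
    JacEquiv A (O - w) (O' - w) := by
  obtain ⟨u, v, hu, hv, h⟩ := h
  exact ⟨u, v, hu, hv, fun e => by simp only [Pi.sub_apply]; linarith [h e]⟩

lemma JacEquiv.of_ccReversal {O O' : Fin m → ℤ} (h : CCReversal A O O') : JacEquiv A O O' := by
  obtain ⟨C, hC | hC, hcomp, hflip, hfix⟩ := h
  · refine ⟨C, 0, hC.2.2.1, ⟨0, (zero_vecMul A).symm⟩, fun e => ?_⟩
    by_cases he : C e = 0
    · simp [hfix e he, he]
    · simp [hflip e he, hcomp e he]; ring
  · refine ⟨0, C, mulVec_zero A, hC.2.2.1, fun e => ?_⟩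
    by_cases he : C e = 0
    · simp [hfix e he, he]
    · simp [hflip e he, hcomp e he]; ring

lemma CCEquiv.jacEquiv {O O' : Fin m → ℤ} (h : CCEquiv A O O') : JacEquiv A O O' :=
  jacEquiv_equivalence.eqvGen_iff.1 (Relation.EqvGen.mono (fun _ _ => JacEquiv.of_ccReversal) _ _ h)

lemma ccReversal_sub_two_smul {O C : Fin m → ℤ} (hO : IsOrientation O)
    (hC : IsCircuit A C ∨ IsCocircuit A C) (hcomp : ∀ e, C e ≠ 0 → O e = C e) :
    CCReversal A O (O - (2 : ℤ) • C) ∧ IsOrientation (O - (2 : ℤ) • C) := by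
  refine ⟨⟨C, hC, hcomp, fun e he => ?_, fun e he => by simp [he]⟩, fun e => ?_⟩
  · simp [← hcomp e he]; ring
  · by_cases he : C e = 0
    · simpa [he] using hO e
    · rcases hO e with h | h <;> simp [← hcomp e he, h]

lemma sum_sq_sub_lt {C u : Fin m → ℤ} (hC : SignVec C) (hC0 : C ≠ 0)
    (hCu : ∀ e, C e ≠ 0 → 1 ≤ C e * u e) : ∑ e, (u e - C e) ^ 2 < ∑ e, u e ^ 2 := by
  have key : ∀ e, C e ≠ 0 → (u e - C e) ^ 2 < u e ^ 2 := fun e he => by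
    have hC2 : C e * C e = 1 := by rcases hC e with h | h | h <;> simp_all
    nlinarith [hCu e he]
  obtain ⟨e₀, he₀⟩ := ne_iff.1 hC0
  refine Finset.sum_lt_sum (fun e _ => ?_) ⟨e₀, mem_univ e₀, key e₀ he₀⟩
  by_cases he : C e = 0
  · simp [he]
  · exact (key e he).le

lemma intCast_mul_nonneg_of_sub_eq_two_mul {O O' u v : Fin m → ℤ} (hO : IsOrientation O)
    (hO' : IsOrientation O') (hdiff : ∀ e, O e - O' e = 2 * (u e + v e)) (e : Fin m) :
    0 ≤ (O e : ℚ) * (u e + v e) ∧ ((O e : ℚ) * u e ≤ 0 ∨ (O e : ℚ) * v e ≤ 0) := by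
  have h := hdiff e
  have hint : 0 ≤ O e * (u e + v e) ∧ (O e * u e ≤ 0 ∨ O e * v e ≤ 0) := by
    rcases hO e with h₁ | h₁ <;> rcases hO' e with h₂ | h₂ <;> rw [h₁, h₂] at h <;>
      simp only [h₁] <;> omega
  exact_mod_cast hint

lemma one_le_mul_of_support_eq {C O w : Fin m → ℤ} {z : Fin m → ℚ} (hsupp : support C = support z)
    (hcomp : ∀ e, C e ≠ 0 → O e = C e) (hz : ∀ e, z e ≠ 0 → 0 < (O e : ℚ) * w e) {e : Fin m}
    (he : C e ≠ 0) : 1 ≤ C e * w e := by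
  have h : 0 < O e * w e := by exact_mod_cast hz e (by rwa [← mem_support, ← hsupp])
  rw [← hcomp e he]
  omega

lemma exists_ccReversal_sum_sq_lt (hA : A.IsTotallyUnimodular) {O O' u v : Fin m → ℤ}
    (hO : IsOrientation O) (hO' : IsOrientation O') (hu : A *ᵥ u = 0)
    (hv : ∃ y : Fin r → ℤ, v = y ᵥ* A) (hdiff : ∀ e, O e - O' e = 2 * (u e + v e))
    (huv : u ≠ 0 ∨ v ≠ 0) :
    ∃ O₁ u₁ v₁ : Fin m → ℤ, CCReversal A O O₁ ∧ IsOrientation O₁ ∧ A *ᵥ u₁ = 0 ∧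
      (∃ y : Fin r → ℤ, v₁ = y ᵥ* A) ∧ (∀ e, O₁ e - O' e = 2 * (u₁ e + v₁ e)) ∧
      ∑ e, u₁ e ^ 2 + ∑ e, v₁ e ^ 2 < ∑ e, u e ^ 2 + ∑ e, v e ^ 2 := by
  obtain ⟨y, rfl⟩ := hv
  have hu' : (Int.cast ∘ u : Fin m → ℚ) ∈ ratKer A := intCast_comp_mem_ratKer.2 hu
  have hv' := intCast_comp_vecMul_mem_ratRowSpace (A := A) y
  have hsign := intCast_mul_nonneg_of_sub_eq_two_mul hO hO' hdiff
  rcases huv with hu0 | hv0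
  · obtain ⟨z, hz, hzO⟩ := exists_isElementary_sign_of_mem_dotOrth hO.intCast hu'
      (by rwa [dotOrth_ratKer]) (mt intCast_comp_eq_zero.1 hu0) (fun e => (hsign e).1)
      (fun e => (hsign e).2)
    obtain ⟨C, hC, hsupp, hcomp⟩ :=
      exists_isCircuit_of_isElementary hA hO hz fun e he => (hzO e he).1
    have hlt := sum_sq_sub_lt hC.1 hC.2.1 fun e => one_le_mul_of_support_eq hsupp hcomp
      (fun e he => (hzO e he).2)
    obtain ⟨hrev, hO₁⟩ := ccReversal_sub_two_smul hO (Or.inl hC) hcomp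
    refine ⟨O - (2 : ℤ) • C, u - C, y ᵥ* A, hrev, hO₁, by rw [mulVec_sub, hu, hC.2.2.1, sub_zero],
      ⟨y, rfl⟩, fun e => ?_, by simpa using hlt⟩
    simp only [Pi.sub_apply, Pi.smul_apply, smul_eq_mul]
    linarith [hdiff e]
  · obtain ⟨z, hz, hzO⟩ := exists_isElementary_sign_of_mem_dotOrth hO.intCast hv'
      (by rwa [dotOrth_ratRowSpace]) (mt intCast_comp_eq_zero.1 hv0)
      (fun e => by simpa [add_comm] using (hsign e).1)
      (fun e => by simpa [or_comm] using (hsign e).2)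
    obtain ⟨C, hC, hsupp, hcomp⟩ :=
      exists_isCocircuit_of_isElementary hA hO hz fun e he => (hzO e he).1
    have hlt := sum_sq_sub_lt hC.1 hC.2.1 fun e => one_le_mul_of_support_eq hsupp hcomp
      (fun e he => (hzO e he).2)
    obtain ⟨hrev, hO₁⟩ := ccReversal_sub_two_smul hO (Or.inr hC) hcomp
    obtain ⟨yC, hyC⟩ := hC.2.2.1
    refine ⟨O - (2 : ℤ) • C, u, y ᵥ* A - C, hrev, hO₁, hu, ⟨y - yC, by rw [sub_vecMul, hyC]⟩,
      fun e => ?_, by simpa using hlt⟩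
    simp only [Pi.sub_apply, Pi.smul_apply, smul_eq_mul]
    linarith [hdiff e]

lemma ccEquiv_of_sum_sq_le (hA : A.IsTotallyUnimodular) (n : ℕ) :
    ∀ {O O' u v : Fin m → ℤ}, IsOrientation O → IsOrientation O' → A *ᵥ u = 0 →
      (∃ y : Fin r → ℤ, v = y ᵥ* A) → (∀ e, O e - O' e = 2 * (u e + v e)) →
      ∑ e, u e ^ 2 + ∑ e, v e ^ 2 ≤ n → CCEquiv A O O' := by
  induction n using Nat.strong_induction_on with
  | _ n IH =>
  intro O O' u v hO hO' hu hv hdiff hn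
  by_cases huv : u = 0 ∧ v = 0
  · obtain ⟨rfl, rfl⟩ := huv
    obtain rfl : O = O' := funext fun e => by simpa [sub_eq_zero] using hdiff e
    exact Relation.EqvGen.refl O
  obtain ⟨O₁, u₁, v₁, hrev, hO₁, hu₁, hv₁, hdiff₁, hlt⟩ :=
    exists_ccReversal_sum_sq_lt hA hO hO' hu hv hdiff (not_and_or.1 huv |>.imp id id)
  have hnonneg : 0 ≤ ∑ e, u₁ e ^ 2 + ∑ e, v₁ e ^ 2 := by positivity
  exact (Relation.EqvGen.rel _ _ hrev).trans _ _ _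
    (IH _ (by omega) hO₁ hO' hu₁ hv₁ hdiff₁ (Int.self_le_toNat _))

lemma ccEquiv_of_jacEquiv (hA : A.IsTotallyUnimodular) {O O' : Fin m → ℤ} (hO : IsOrientation O)
    (hO' : IsOrientation O') (h : JacEquiv A O O') : CCEquiv A O O' := by
  obtain ⟨u, v, hu, hv, hdiff⟩ := h
  exact ccEquiv_of_sum_sq_le hA _ hO hO' hu hv hdiff (Int.self_le_toNat _)

end JacobianTorsor

section Surjectivity

open Function

variable {r m : ℕ} {A : Matrix (Fin r) (Fin m) ℤ}

lemma IsOrientation.update {O : Fin m → ℤ} (hO : IsOrientation O) (i : Fin m) {s : ℤ}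
    (hs : s = 1 ∨ s = -1) : IsOrientation (update O i s) := fun e => by
  by_cases he : e = i
  · subst he; simpa using hs
  · simpa [he] using hO e

/-- Minty's lemma for regular matroids. -/
lemma exists_isCircuit_or_isCocircuit_ne_zero (hA : A.IsTotallyUnimodular) {O : Fin m → ℤ}
    (hO : IsOrientation O) (i : Fin m) :
    ∃ C, (IsCircuit A C ∨ IsCocircuit A C) ∧ C i ≠ 0 ∧ ∀ e, C e ≠ 0 → O e = C e := by
  rcases exists_isElementary_sign_through (V := ratKer A) hO.intCast i with
    ⟨z, hz, hzi, hzO⟩ | ⟨z, hz, hzi, hzO⟩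
  · obtain ⟨C, hC, hsupp, hcomp⟩ := exists_isCircuit_of_isElementary hA hO hz hzO
    exact ⟨C, Or.inl hC, by rwa [← mem_support, hsupp], hcomp⟩
  · rw [dotOrth_ratKer] at hz
    obtain ⟨C, hC, hsupp, hcomp⟩ := exists_isCocircuit_of_isElementary hA hO hz hzO
    exact ⟨C, Or.inr hC, by rwa [← mem_support, hsupp], hcomp⟩

lemma exists_orientation_jacEquiv_apply_eq_neg (hA : A.IsTotallyUnimodular) {O : Fin m → ℤ}
    (hO : IsOrientation O) (i : Fin m) {s : ℤ} (hs : s = 1 ∨ s = -1) :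
    ∃ O₁, IsOrientation O₁ ∧ O₁ i = -s ∧ JacEquiv A O₁ O := by
  by_cases hOi : O i = s
  · obtain ⟨C, hC, hCi, hcomp⟩ := exists_isCircuit_or_isCocircuit_ne_zero hA hO i
    obtain ⟨hrev, hO₁⟩ := ccReversal_sub_two_smul hO hC hcomp
    refine ⟨_, hO₁, ?_, jacEquiv_equivalence.symm (.of_ccReversal hrev)⟩
    simp [← hcomp i hCi, hOi]
    ring
  · exact ⟨O, hO, by rcases hO i with h | h <;> rcases hs with rfl | rfl <;> omega,
      jacEquiv_equivalence.refl O⟩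

lemma exists_orientation_jacEquiv (hA : A.IsTotallyUnimodular) {O₀ : Fin m → ℤ}
    (hO₀ : IsOrientation O₀) (γ : Fin m → ℤ) :
    ∃ O, IsOrientation O ∧ JacEquiv A (O - (2 : ℤ) • γ) O₀ := by
  induction h : ∑ e, (γ e).natAbs using Nat.strong_induction_on generalizing γ with
  | _ n IH =>
  by_cases hγ : γ = 0
  · exact ⟨O₀, hO₀, by simpa [hγ] using jacEquiv_equivalence.refl O₀⟩
  obtain ⟨i, hi⟩ : ∃ i, γ i ≠ 0 := ne_iff.1 hγ
  set s : ℤ := if 0 < γ i then 1 else -1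
  have hs : s = 1 ∨ s = -1 := by unfold s; split_ifs <;> simp
  have hlt : ∑ e, ((γ - Pi.single i s : Fin m → ℤ) e).natAbs < n := by
    rw [← h]
    refine Finset.sum_lt_sum (fun e _ => ?_) ⟨i, mem_univ i, ?_⟩
    · by_cases he : e = i
      · subst he; simp only [Pi.sub_apply, Pi.single_eq_same, s]; split_ifs <;> omega
      · simp [he]
    · simp only [Pi.sub_apply, Pi.single_eq_same, s]; split_ifs <;> omega
  obtain ⟨O', hO', hγ'⟩ := IH _ hlt (γ - Pi.single i s) rfl
  obtain ⟨O₁, hO₁, hO₁i, h₁⟩ := exists_orientation_jacEquiv_apply_eq_neg hA hO' i hs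
  refine ⟨update O₁ i s, hO₁.update i hs, ?_⟩
  have hshift : update O₁ i s - (2 : ℤ) • γ = O₁ - (2 : ℤ) • (γ - Pi.single i s) := by
    funext e
    by_cases he : e = i
    · subst he; simp [hO₁i]; ring
    · simp [he]
  rw [hshift]
  exact jacEquiv_equivalence.trans h₁.sub_right hγ'

end Surjectivity

theorem stmt0_general {r m : ℕ} (A : Matrix (Fin r) (Fin m) ℤ)
    (hTU : A.IsTotallyUnimodular)
    (O₀ : Fin m → ℤ) (hO₀ : IsOrientation O₀) :
    (∀ O O' : Fin m → ℤ, IsOrientation O → IsOrientation O' →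
      (CCEquiv A O O' ↔ ∃ u v : Fin m → ℤ, A.mulVec u = 0 ∧
        (∃ y : Fin r → ℤ, v = Matrix.vecMul y A) ∧
        ∀ e, O e - O' e = 2 * (u e + v e))) ∧
    (∀ γ : Fin m → ℤ, ∃ O : Fin m → ℤ, IsOrientation O ∧
      ∃ u v : Fin m → ℤ, A.mulVec u = 0 ∧ (∃ y : Fin r → ℤ, v = Matrix.vecMul y A) ∧
        ∀ e, O e - O₀ e = 2 * (γ e + u e + v e)) := by
  refine ⟨fun O O' hO hO' => ⟨CCEquiv.jacEquiv, ccEquiv_of_jacEquiv hTU hO hO'⟩, fun γ => ?_⟩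
  obtain ⟨O, hO, u, v, hu, hv, hdiff⟩ := exists_orientation_jacEquiv hTU hO₀ γ
  refine ⟨O, hO, u, v, hu, hv, fun e => ?_⟩
  have := hdiff e
  simp only [Pi.sub_apply, Pi.smul_apply, smul_eq_mul] at this
  linarith

/-- Orientations `O`, `O'` are circuit–cocircuit-reversal equivalent iff
`(O - O')/2 ∈ Λ_A + Λ*_A`; moreover every `γ ∈ ℤ^E` is of the form `(O - O₀)/2` modulo
`Λ_A + Λ*_A`.  Hence the circuit–cocircuit reversal classes form a torsor under
`Jac(M) = ℤ^E/(Λ_A + Λ*_A)`. -/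
theorem stmt0 {r m : ℕ} (A : Matrix (Fin r) (Fin m) ℤ)
    (hTU : A.IsTotallyUnimodular) (hrank : (A.map ((↑) : ℤ → ℝ)).rank = r)
    (O₀ : Fin m → ℤ) (hO₀ : IsOrientation O₀) :
    (∀ O O' : Fin m → ℤ, IsOrientation O → IsOrientation O' →
      (CCEquiv A O O' ↔ ∃ u v : Fin m → ℤ, A.mulVec u = 0 ∧
        (∃ y : Fin r → ℤ, v = Matrix.vecMul y A) ∧
        ∀ e, O e - O' e = 2 * (u e + v e))) ∧
    (∀ γ : Fin m → ℤ, ∃ O : Fin m → ℤ, IsOrientation O ∧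
      ∃ u v : Fin m → ℤ, A.mulVec u = 0 ∧ (∃ y : Fin r → ℤ, v = Matrix.vecMul y A) ∧
        ∀ e, O e - O₀ e = 2 * (γ e + u e + v e)) :=
  stmt0_general A hTU O₀ hO₀
end

section
/- The image of the map ψ on continuous orientations is exactly the zonotope Z_A, and two continuous orientations O, O' satisfy ψ(O) = ψ(O') if and only if O and O' are continuous circuit-reversal equivalent. Hence ψ induces a bijection between the set of continuous circuit-reversal classes of continuous orientations of M and the set of points of Z_A. -/
open Matrix

/-- A signed circuit of a real matrix `A`. -/
def IsCircuitR {r m : ℕ} (A : Matrix (Fin r) (Fin m) ℝ) (C : Fin m → ℝ) : Prop :=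
  C ≠ 0 ∧ A.mulVec C = 0 ∧
    ∀ v : Fin m → ℝ, v ≠ 0 → A.mulVec v = 0 →
      {e | v e ≠ 0} ⊆ {e | C e ≠ 0} → {e | v e ≠ 0} = {e | C e ≠ 0}

/-- A continuous orientation: a function `E → [-1,1]`. -/
def ContOrientation {m : ℕ} (O : Fin m → ℝ) : Prop := ∀ e, O e ∈ Set.Icc (-1 : ℝ) 1

/-- A continuous orientation is compatible with a signed circuit `C` if
`O(e) ≠ -sign(C(e))` for every `e` in the support of `C`. -/
def CompatC {m : ℕ} (C O : Fin m → ℝ) : Prop := ∀ e, C e ≠ 0 → O e ≠ -Real.sign (C e)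

/-- One continuous circuit reversal: `O' = O - ε•C` for some `ε > 0` and a signed circuit
`C` compatible with `O`, all values remaining in `[-1,1]`. -/
def ContReversal {r m : ℕ} (A : Matrix (Fin r) (Fin m) ℝ) (O O' : Fin m → ℝ) : Prop :=
  ∃ (C : Fin m → ℝ) (ε : ℝ), IsCircuitR A C ∧ 0 < ε ∧ CompatC C O ∧
    O' = O - ε • C ∧ ContOrientation O'

/-- Continuous circuit-reversal equivalence. -/
def ContEquiv {r m : ℕ} (A : Matrix (Fin r) (Fin m) ℝ) : (Fin m → ℝ) → (Fin m → ℝ) → Prop :=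
  Relation.EqvGen (ContReversal A)

/-- `ψ(O) = A·((O+1)/2)`. -/
noncomputable def psiR {r m : ℕ} (A : Matrix (Fin r) (Fin m) ℝ) (O : Fin m → ℝ) : Fin r → ℝ :=
  A.mulVec (fun e => (O e + 1) / 2)

/-- The zonotope `Z_A = {Ax : x ∈ [0,1]^E}`. -/
def ZA {r m : ℕ} (A : Matrix (Fin r) (Fin m) ℝ) : Set (Fin r → ℝ) :=
  {z | ∃ x : Fin m → ℝ, (∀ e, x e ∈ Set.Icc (0 : ℝ) 1) ∧ z = A.mulVec x}

lemma exists_conformal_circuit {r m : ℕ} (A : Matrix (Fin r) (Fin m) ℝ)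
    (d : Fin m → ℝ) (hd0 : d ≠ 0) (hdk : A.mulVec d = 0) :
    ∃ C, IsCircuitR A C ∧ ∀ e, C e ≠ 0 → 0 < C e * d e := by
  classical
  set S : Set (Fin m → ℝ) :=
    {w | w ≠ 0 ∧ A.mulVec w = 0 ∧ ∀ e, w e ≠ 0 → 0 < w e * d e} with hS
  have hdS : d ∈ S := ⟨hd0, hdk, fun e he => mul_self_pos.mpr he⟩
  have hne : {n | ∃ w ∈ S, ({e | w e ≠ 0}).ncard = n}.Nonempty := ⟨_, d, hdS, rfl⟩
  obtain ⟨n, ⟨w, hwS, hwn⟩, hmin⟩ := Nat.lt_wfRel.wf.has_min _ hne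
  obtain ⟨hw0, hwk, hwconf⟩ := hwS
  refine ⟨w, ⟨hw0, hwk, ?_⟩, hwconf⟩
  intro v hv0 hvk hvsub
  by_contra hneq
  have hss : {e | v e ≠ 0} ⊂ {e | w e ≠ 0} := ⟨hvsub, fun h => hneq (le_antisymm hvsub h)⟩
  -- pick e0 in supp v minimizing |w e / v e|
  have hvsupp : {e | v e ≠ 0}.Nonempty := by
    obtain ⟨e, he⟩ := Function.ne_iff.mp hv0
    exact ⟨e, he⟩
  obtain ⟨e0, he0, he0min⟩ := Set.exists_min_image {e | v e ≠ 0} (fun e => |w e / v e|)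
    (Set.toFinite _) hvsupp
  set t : ℝ := w e0 / v e0 with ht
  set w' : Fin m → ℝ := w - t • v with hw'
  -- key sign fact: for e with v e ≠ 0, 0 ≤ (w e - t * v e) * w e
  have key : ∀ e, v e ≠ 0 → 0 ≤ w' e * w e := by
    intro e hve
    have hwe : w e ≠ 0 := hvsub hve
    have h1 : |t| ≤ |w e / v e| := he0min e hve
    have h2 : |t * v e| ≤ |w e| := by
      rw [abs_mul]
      calc |t| * |v e| ≤ |w e / v e| * |v e| := by
            exact mul_le_mul_of_nonneg_right h1 (abs_nonneg _)
        _ = |w e| := by rw [abs_div]; field_simp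
    have : w' e * w e = w e ^ 2 - (t * v e) * w e := by
      simp [hw']; ring
    rw [this]
    have h3 : (t * v e) * w e ≤ |t * v e| * |w e| := by
      calc (t * v e) * w e ≤ |(t * v e) * w e| := le_abs_self _
        _ = |t * v e| * |w e| := abs_mul _ _
    have h4 : |t * v e| * |w e| ≤ |w e| * |w e| :=
      mul_le_mul_of_nonneg_right h2 (abs_nonneg _)
    have h5 : |w e| * |w e| = w e ^ 2 := by rw [← sq_abs (w e)]; ring
    nlinarith [h3, h4]
  have hw'e0 : w' e0 = 0 := by
    have hv0' : v e0 ≠ 0 := he0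
    simp only [hw', Pi.sub_apply, Pi.smul_apply, smul_eq_mul, ht]
    rw [div_mul_cancel₀ _ hv0', sub_self]
  have hw'supp : {e | w' e ≠ 0} ⊆ {e | w e ≠ 0} := by
    intro e he
    by_contra hwe
    simp only [Set.mem_setOf_eq, not_not] at hwe
    have hve : v e = 0 := by
      by_contra hve
      exact (hvsub hve) hwe
    have : w' e = 0 := by simp [hw', hve, hwe]
    exact he this
  -- w' is nonzero: take e1 ∈ supp w \ supp v
  obtain ⟨e1, he1w, he1v⟩ := Set.exists_of_ssubset hss
  simp only [Set.mem_setOf_eq, not_not] at he1v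
  have hw'e1 : w' e1 = w e1 := by simp [hw', he1v]
  have hw'0 : w' ≠ 0 := by
    intro h
    rw [h] at hw'e1
    exact he1w hw'e1.symm
  have hw'k : A.mulVec w' = 0 := by
    rw [hw', Matrix.mulVec_sub, Matrix.mulVec_smul, hwk, hvk]
    simp
  have hw'conf : ∀ e, w' e ≠ 0 → 0 < w' e * d e := by
    intro e he
    have hwe : w e ≠ 0 := hw'supp he
    by_cases hve : v e = 0
    · have : w' e = w e := by simp [hw', hve]
      rw [this]; exact hwconf e hwe
    · have h1 : 0 ≤ w' e * w e := key e hve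
      have h2 : w' e * w e ≠ 0 := mul_ne_zero he hwe
      have h3 : 0 < w' e * w e := lt_of_le_of_ne h1 (Ne.symm h2)
      have h4 : 0 < w e * d e := hwconf e hwe
      nlinarith [mul_self_pos.mpr hwe]
  have hw'S : w' ∈ S := ⟨hw'0, hw'k, hw'conf⟩
  have hssw : {e | w' e ≠ 0} ⊂ {e | w e ≠ 0} := by
    refine ⟨hw'supp, fun h => ?_⟩
    have : e0 ∈ {e | w' e ≠ 0} := h (hvsub he0)
    exact this hw'e0
  have hcard : ({e | w' e ≠ 0}).ncard < n := by
    rw [← hwn]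
    exact Set.ncard_lt_ncard hssw (Set.toFinite _)
  exact hmin _ ⟨w', hw'S, rfl⟩ hcard

lemma reversal_step {r m : ℕ} (A : Matrix (Fin r) (Fin m) ℝ) (O O' : Fin m → ℝ)
    (hO : ContOrientation O) (hO' : ContOrientation O')
    (hk : A.mulVec (O - O') = 0) (hne : O ≠ O') :
    ∃ O₁, ContReversal A O O₁ ∧ A.mulVec (O₁ - O') = 0 ∧
      {e | O₁ e ≠ O' e} ⊂ {e | O e ≠ O' e} := by
  have hd0 : O - O' ≠ 0 := sub_ne_zero.mpr hne
  obtain ⟨C, hC, hconf⟩ := exists_conformal_circuit A (O - O') hd0 hk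
  set d : Fin m → ℝ := O - O' with hd
  have hde : ∀ e, d e = O e - O' e := fun e => rfl
  have hCd : ∀ e, C e ≠ 0 → d e ≠ 0 := by
    intro e he h0
    have := hconf e he
    rw [h0, mul_zero] at this
    exact lt_irrefl _ this
  have hratio : ∀ e, C e ≠ 0 → 0 < d e / C e := by
    intro e he
    rcases lt_or_gt_of_ne he with hneg | hpos
    · have hdneg : d e < 0 := by nlinarith [hconf e he]
      exact div_pos_of_neg_of_neg hdneg hneg
    · have hdpos : 0 < d e := by nlinarith [hconf e he]
      exact div_pos hdpos hpos
  obtain ⟨ef, hef⟩ := Function.ne_iff.mp hC.1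
  obtain ⟨e0, he0, he0min⟩ := Set.exists_min_image {e | C e ≠ 0} (fun e => d e / C e)
    (Set.toFinite _) ⟨ef, hef⟩
  set ε : ℝ := d e0 / C e0 with hε
  have hεpos : 0 < ε := hratio e0 he0
  -- bounds for ε * C e, e ∈ supp C
  have hbound : ∀ e, C e ≠ 0 → (0 < ε * C e * d e ∧ |ε * C e| ≤ |d e|) := by
    intro e he
    have hle : ε ≤ d e / C e := he0min e he
    rcases lt_or_gt_of_ne he with hneg | hpos
    · have hdneg : d e < 0 := by nlinarith [hconf e he]
      have h1 : ε * C e ≥ (d e / C e) * C e :=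
        (mul_le_mul_of_nonpos_right hle (le_of_lt hneg))
      rw [div_mul_cancel₀ _ he] at h1
      have h2 : ε * C e < 0 := mul_neg_of_pos_of_neg hεpos hneg
      constructor
      · nlinarith
      · rw [abs_of_neg h2, abs_of_neg hdneg]; linarith
    · have hdpos : 0 < d e := by nlinarith [hconf e he]
      have h1 : ε * C e ≤ (d e / C e) * C e :=
        (mul_le_mul_of_nonneg_right hle (le_of_lt hpos))
      rw [div_mul_cancel₀ _ he] at h1
      have h2 : 0 < ε * C e := mul_pos hεpos hpos
      constructor
      · nlinarith
      · rw [abs_of_pos h2, abs_of_pos hdpos]; linarith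
  set O₁ : Fin m → ℝ := O - ε • C with hO₁
  have hO₁e : ∀ e, O₁ e = O e - ε * C e := fun e => rfl
  have hO₁orient : ContOrientation O₁ := by
    intro e
    by_cases he : C e = 0
    · rw [hO₁e, he, mul_zero, sub_zero]; exact hO e
    · obtain ⟨hs, hb⟩ := hbound e he
      rw [hO₁e]
      have hOe := hO e
      have hO'e := hO' e
      have hdsub : O e - d e = O' e := by rw [hde]; ring
      constructor
      · rcases lt_or_gt_of_ne he with hneg | hpos
        · have : ε * C e < 0 := mul_neg_of_pos_of_neg hεpos hneg
          linarith [hOe.1]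
        · have h2 : 0 < ε * C e := mul_pos hεpos hpos
          have hdpos : 0 < d e := by nlinarith
          rw [abs_of_pos h2, abs_of_pos hdpos] at hb
          linarith [hO'e.1]
      · rcases lt_or_gt_of_ne he with hneg | hpos
        · have h2 : ε * C e < 0 := mul_neg_of_pos_of_neg hεpos hneg
          have hdneg : d e < 0 := by nlinarith
          rw [abs_of_neg h2, abs_of_neg hdneg] at hb
          linarith [hO'e.2]
        · have : 0 < ε * C e := mul_pos hεpos hpos
          linarith [hOe.2]
  have hcompat : CompatC C O := by
    intro e he
    rcases lt_or_gt_of_ne he with hneg | hpos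
    · have hdneg : d e < 0 := by nlinarith [hconf e he]
      rw [Real.sign_of_neg hneg]
      have : O e < O' e := by rw [hde] at hdneg; simp at hdneg; linarith [hdneg]
      have h2 := (hO' e).2
      intro h
      have h1 : O e = 1 := by rw [h]; norm_num
      linarith
    · have hdpos : 0 < d e := by nlinarith [hconf e he]
      rw [Real.sign_of_pos hpos]
      have hlt : O' e < O e := by
        have := hde e; simp [hd] at this ⊢; linarith [show (0:ℝ) < O e - O' e from hdpos]
      have h2 := (hO' e).1
      intro h
      have h1 : O e = -1 := by rw [h]
      linarith
  refine ⟨O₁, ⟨C, ε, hC, hεpos, hcompat, hO₁, hO₁orient⟩, ?_, ?_⟩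
  · have : O₁ - O' = d - ε • C := by
      rw [hO₁, hd]; abel
    rw [this, Matrix.mulVec_sub, Matrix.mulVec_smul, hk, hC.2.1]
    simp
  · constructor
    · intro e he
      simp only [Set.mem_setOf_eq] at he ⊢
      intro h0
      have hdz : d e = 0 := by rw [hde, h0, sub_self]
      have hCz : C e = 0 := by
        by_contra hc; exact hCd e hc hdz
      rw [hO₁e, hCz, mul_zero, sub_zero] at he
      exact he h0
    · intro hsub
      have he0mem : e0 ∈ {e | O e ≠ O' e} := by
        simp only [Set.mem_setOf_eq]
        intro h0
        exact hCd e0 he0 (by rw [hde, h0, sub_self])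
      have := hsub he0mem
      simp only [Set.mem_setOf_eq] at this
      apply this
      rw [hO₁e, hε, div_mul_cancel₀ _ he0, hde, sub_sub_cancel]

lemma equiv_of_kernel {r m : ℕ} (A : Matrix (Fin r) (Fin m) ℝ) :
    ∀ (n : ℕ) (O O' : Fin m → ℝ), ContOrientation O → ContOrientation O' →
      A.mulVec (O - O') = 0 → ({e | O e ≠ O' e}).ncard ≤ n → ContEquiv A O O' := by
  intro n
  induction n with
  | zero =>
    intro O O' hO hO' hk hc
    have h0 : ({e | O e ≠ O' e}).ncard = 0 := Nat.le_zero.mp hc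
    have hemp : {e | O e ≠ O' e} = ∅ := (Set.ncard_eq_zero (Set.toFinite _)).mp h0
    have : O = O' := by
      funext e
      by_contra h
      have : e ∈ {e | O e ≠ O' e} := h
      rw [hemp] at this
      exact this
    rw [this]
    exact Relation.EqvGen.refl O'
  | succ n ih =>
    intro O O' hO hO' hk hc
    by_cases h : O = O'
    · rw [h]; exact Relation.EqvGen.refl O'
    · obtain ⟨O₁, hrev, hk1, hss⟩ := reversal_step A O O' hO hO' hk h
      have hO₁ : ContOrientation O₁ := by
        obtain ⟨C, ε, _, _, _, _, horient⟩ := hrev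
        exact horient
      have hlt : ({e | O₁ e ≠ O' e}).ncard < ({e | O e ≠ O' e}).ncard :=
        Set.ncard_lt_ncard hss (Set.toFinite _)
      exact Relation.EqvGen.trans _ _ _ (Relation.EqvGen.rel _ _ hrev)
        (ih O₁ O' hO₁ hO' hk1 (by omega))

lemma psi_eq_of_reversal {r m : ℕ} (A : Matrix (Fin r) (Fin m) ℝ) {O O' : Fin m → ℝ}
    (h : ContReversal A O O') : psiR A O = psiR A O' := by
  obtain ⟨C, ε, hC, hεpos, _, hOO', _⟩ := h
  have : (fun e => (O' e + 1) / 2) = (fun e => (O e + 1) / 2) - (ε / 2) • C := by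
    funext e
    rw [hOO']
    simp
    ring
  unfold psiR
  rw [this, Matrix.mulVec_sub, Matrix.mulVec_smul, hC.2.1]
  simp

/-- The image of `ψ` on continuous orientations is exactly the zonotope `Z_A`, and
`ψ(O) = ψ(O')` iff `O`, `O'` are continuous circuit-reversal equivalent; hence `ψ` induces
a bijection between continuous circuit-reversal classes and points of `Z_A`. -/
theorem stmt2 {r m : ℕ} (A : Matrix (Fin r) (Fin m) ℝ) (hrank : A.rank = r) :
    (∀ O : Fin m → ℝ, ContOrientation O → psiR A O ∈ ZA A) ∧
    (∀ z ∈ ZA A, ∃ O : Fin m → ℝ, ContOrientation O ∧ psiR A O = z) ∧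
    (∀ O O' : Fin m → ℝ, ContOrientation O → ContOrientation O' →
      (psiR A O = psiR A O' ↔ ContEquiv A O O')) := by
  classical
  refine ⟨?_, ?_, ?_⟩
  · intro O hO
    refine ⟨fun e => (O e + 1) / 2, fun e => ?_, rfl⟩
    have := hO e
    have hmem : ((O e + 1) / 2) ∈ Set.Icc (0:ℝ) 1 := ⟨by linarith [this.1], by linarith [this.2]⟩
    exact hmem
  · rintro z ⟨x, hx, rfl⟩
    refine ⟨fun e => 2 * x e - 1, fun e => ?_, ?_⟩
    · have := hx e
      have hmem : (2 * x e - 1) ∈ Set.Icc (-1:ℝ) 1 := ⟨by linarith [this.1], by linarith [this.2]⟩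
      exact hmem
    · unfold psiR
      congr 1
      funext e
      ring
  · intro O O' hO hO'
    constructor
    · intro hpsi
      have hk : A.mulVec (O - O') = 0 := by
        have h1 : (O - O') = (2 : ℝ) • ((fun e => (O e + 1) / 2) - fun e => (O' e + 1) / 2) := by
          funext e; simp; ring
        rw [h1, Matrix.mulVec_smul, Matrix.mulVec_sub]
        unfold psiR at hpsi
        rw [hpsi]
        simp
      exact equiv_of_kernel A _ O O' hO hO' hk le_rfl
    · intro heq
      clear hO hO'
      induction heq with
      | rel x y hxy => exact psi_eq_of_reversal A hxy
      | refl x => rfl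
      | symm x y _ ih => exact ih.symm
      | trans x y z _ _ ih1 ih2 => exact ih1.trans ih2
end

section
/- Every continuous circuit-reversal equivalence class of continuous orientations of M contains exactly one σ-compatible continuous orientation. -/
open Matrix

/-- `O` is σ-compatible (for the acyclic signature induced by `w`): every signed circuit
compatible with `O` satisfies `w·C > 0`. -/
def SigmaCompat {r m : ℕ} (A : Matrix (Fin r) (Fin m) ℝ) (w : Fin m → ℝ)
    (O : Fin m → ℝ) : Prop :=
  ∀ C : Fin m → ℝ, IsCircuitR A C → CompatC C O → 0 < w ⬝ᵥ C

/-!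
Circuit reversals keep `A *ᵥ O` fixed, and conversely two continuous orientations with the same
image are equivalent: reversing a circuit conformal to their difference, as far as the cube
`[-1,1]^E` allows, shrinks the support of the difference. So an equivalence class is a fibre of
`A` intersected with the cube, a compact set. A maximiser of `w ⬝ᵥ ·` on it is σ-compatible,
since reversing a compatible circuit `C` with `w ⬝ᵥ C < 0` a little would increase `w`. Two
σ-compatible orientations `O₁ ≠ O₂` in one class are impossible: a circuit `C` conformal to
`O₂ - O₁` is compatible with `O₂` and `-C` with `O₁`, so `w ⬝ᵥ C` would be both positive and
negative.
-/

open Filter Topology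

def SignConformal {ι : Type*} (u v : ι → ℝ) : Prop := ∀ e, u e ≠ 0 → 0 < u e * v e

section SignConformal

variable {ι : Type*} {u v w : ι → ℝ}

lemma SignConformal.support_subset (h : SignConformal u v) :
    Function.support u ⊆ Function.support v := fun e he hv => by
  simpa [hv] using h e he

lemma SignConformal.trans (huv : SignConformal u v) (hvw : SignConformal v w) :
    SignConformal u w := fun e he => by
  have h1 := huv e he
  have h2 := hvw e (fun h => by simp [h] at h1)
  have : 0 < u e * w e * v e ^ 2 := by nlinarith
  exact pos_of_mul_pos_left this (sq_nonneg _)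

lemma SignConformal.neg (h : SignConformal u v) : SignConformal (-u) (-v) := fun e he => by
  simpa using h e (by simpa using he)

lemma SignConformal.smul (h : SignConformal u v) {t : ℝ} (ht : 0 < t) :
    SignConformal (t • u) v := fun e he => by
  have := h e (right_ne_zero_of_mul he)
  simp only [Pi.smul_apply, smul_eq_mul, mul_assoc]
  positivity

lemma SignConformal.mul_nonneg (hu : SignConformal u w) (hv : SignConformal v w) (e : ι) :
    0 ≤ u e * v e := by
  by_cases hue : u e = 0
  · simp [hue]
  by_cases hve : v e = 0
  · simp [hve]
  have h1 := hu e hue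
  have h2 := hv e hve
  have : 0 < u e * v e * w e ^ 2 := by nlinarith
  exact (pos_of_mul_pos_left this (sq_nonneg _)).le

/-- `t` is the least ratio `v e / u e` over the coordinates where `u` and `v` have the same sign. -/
lemma exists_sub_smul_signConformal [Fintype ι]
    (hsupp : Function.support u ⊆ Function.support v) (hpos : ∃ e, 0 < u e * v e) :
    ∃ t : ℝ, 0 < t ∧ SignConformal (v - t • u) v ∧
      Function.support (v - t • u) ⊂ Function.support v := by
  classical
  set T := Finset.univ.filter fun e => 0 < u e * v e
  have hT : T.Nonempty := by simpa [T, Finset.filter_nonempty_iff] using hpos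
  have hu_ne {e} (he : e ∈ T) : u e ≠ 0 := by
    intro h; simp [T, h] at he
  have hv_ne {e} (he : e ∈ T) : v e ≠ 0 := by
    intro h; simp [T, h] at he
  obtain ⟨e₀, he₀, ht⟩ := Finset.exists_mem_eq_inf' hT fun e => v e / u e
  set t := T.inf' hT fun e => v e / u e
  have ht_le {e} (he : e ∈ T) : t ≤ v e / u e := Finset.inf'_le _ he
  have ht_pos : 0 < t :=
    ht ▸ div_pos_iff.2 (mul_pos_iff.1 (mul_comm (u e₀) _ ▸ (Finset.mem_filter.1 he₀).2))
  have hconf : SignConformal (v - t • u) v := by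
    intro e he
    have hve : v e ≠ 0 := fun h => he <| by
      simp [h, show u e = 0 by simpa [h] using mt (@hsupp e)]
    have hexp : (v - t • u) e * v e = v e * v e - t * (u e * v e) := by simp; ring
    suffices 0 ≤ (v - t • u) e * v e from lt_of_le_of_ne this (mul_ne_zero he hve).symm
    rw [hexp, sub_nonneg]
    by_cases heT : e ∈ T
    · have hmem : 0 < u e * v e := (Finset.mem_filter.mp heT).2
      calc t * (u e * v e) ≤ v e / u e * (u e * v e) := by gcongr; exact ht_le heT
        _ = v e * v e := by field_simp [hu_ne heT]
    · have : u e * v e ≤ 0 := by simpa [T] using heT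
      nlinarith [mul_self_nonneg (v e)]
  refine ⟨t, ht_pos, hconf, (Set.ssubset_iff_of_subset hconf.support_subset).2 ⟨e₀, hv_ne he₀, ?_⟩⟩
  simp [ht, hu_ne he₀]

end SignConformal

section Circuit

variable {r m : ℕ} {A : Matrix (Fin r) (Fin m) ℝ}

lemma IsCircuitR.neg {C : Fin m → ℝ} (hC : IsCircuitR A C) : IsCircuitR A (-C) := by
  obtain ⟨h0, hk, hmin⟩ := hC
  refine ⟨neg_ne_zero.2 h0, by simp [Matrix.mulVec_neg, hk], fun v hv hvk hsub => ?_⟩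
  simpa using hmin v hv hvk (by simpa using hsub)

/-- A kernel vector of minimal support among those conformal to `d` is a circuit: otherwise a
smaller kernel vector could be eliminated from it. -/
lemma exists_isCircuitR_signConformal {d : Fin m → ℝ} (hd : d ≠ 0) (hAd : A *ᵥ d = 0) :
    ∃ C, IsCircuitR A C ∧ SignConformal C d := by
  suffices ∀ n (v : Fin m → ℝ), (Function.support v).ncard = n → v ≠ 0 → A *ᵥ v = 0 →
      SignConformal v d → ∃ C, IsCircuitR A C ∧ SignConformal C d from
    this _ d rfl hd hAd fun e he => mul_self_pos.2 he
  intro n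
  induction n using Nat.strong_induction_on with
  | _ n ih =>
  rintro v rfl hv hAv hvd
  by_cases hcirc : IsCircuitR A v
  · exact ⟨v, hcirc, hvd⟩
  obtain ⟨u, hu, hAu, hsub, hne⟩ : ∃ u : Fin m → ℝ, u ≠ 0 ∧ A *ᵥ u = 0 ∧
      Function.support u ⊆ Function.support v ∧ Function.support u ≠ Function.support v := by
    unfold IsCircuitR at hcirc
    push Not at hcirc
    exact hcirc hv hAv
  obtain ⟨e, he⟩ := Function.ne_iff.1 hu
  have hc : u e * v e ≠ 0 := mul_ne_zero he (hsub he)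
  have hsupp : Function.support ((u e * v e) • u) = Function.support u :=
    Function.support_const_smul_of_ne_zero _ _ hc
  obtain ⟨t, ht, hconf, hss⟩ := exists_sub_smul_signConformal (u := (u e * v e) • u)
    (hsupp ▸ hsub) ⟨e, by simpa [mul_assoc] using mul_self_pos.2 hc⟩
  refine ih _ (Set.ncard_lt_ncard hss) _ rfl ?_ ?_ (hconf.trans hvd)
  · intro h0
    rw [sub_eq_zero] at h0
    exact hne (by rw [h0, Function.support_const_smul_of_ne_zero _ _ ht.ne', hsupp])
  · simp [Matrix.mulVec_sub, Matrix.mulVec_smul, hAv, hAu]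

end Circuit

lemma Set.OrdConnected.add_mem_of_mul_nonneg {s : Set ℝ} (hs : s.OrdConnected) {x a b : ℝ}
    (hx : x ∈ s) (hy : x + (a + b) ∈ s) (hab : 0 ≤ a * b) : x + a ∈ s := by
  refine hs.uIcc_subset hx hy (Set.mem_uIcc.2 ?_)
  rcases le_total 0 a with ha | ha <;> rcases le_total 0 b with hb | hb
  · exact Or.inl ⟨by linarith, by linarith⟩
  · rcases mul_eq_zero.1 (le_antisymm (mul_nonpos_of_nonneg_of_nonpos ha hb) hab) with rfl | rfl <;>
      simp [le_total]
  · rcases mul_eq_zero.1 (le_antisymm (mul_nonpos_of_nonpos_of_nonneg ha hb) hab) with rfl | rfl <;>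
      simp [le_total]
  · exact Or.inr ⟨by linarith, by linarith⟩

lemma eventually_sub_mul_mem_Icc {x c : ℝ} (hx : x ∈ Set.Icc (-1 : ℝ) 1)
    (hc : c ≠ 0 → x ≠ -Real.sign c) : ∀ᶠ ε in 𝓝[>] (0 : ℝ), x - ε * c ∈ Set.Icc (-1 : ℝ) 1 := by
  have hlim : Tendsto (fun ε => x - ε * c) (𝓝[>] 0) (𝓝 x) :=
    ((continuous_const.sub (continuous_id.mul continuous_const)).tendsto' 0 x
      (by simp)).mono_left nhdsWithin_le_nhds
  rcases lt_trichotomy c 0 with h | rfl | h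
  · have hx1 : x < 1 := hx.2.lt_of_ne (by simpa [Real.sign_of_neg h] using hc h.ne)
    filter_upwards [hlim.eventually (gt_mem_nhds hx1), self_mem_nhdsWithin] with ε h1 (h2 : 0 < ε)
    exact ⟨by nlinarith [hx.1], h1.le⟩
  · simpa using hx
  · have hx1 : -1 < x := hx.1.lt_of_ne (by simpa [Real.sign_of_pos h] using (hc h.ne').symm)
    filter_upwards [hlim.eventually (lt_mem_nhds hx1), self_mem_nhdsWithin] with ε h1 (h2 : 0 < ε)
    exact ⟨h1.le, by nlinarith [hx.2]⟩

section Orientation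

variable {m : ℕ} {O C d : Fin m → ℝ}

lemma ContOrientation.add_of_signConformal {a : Fin m → ℝ} (hO : ContOrientation O)
    (hOd : ContOrientation (O + d)) (ha : SignConformal a d) (hda : SignConformal (d - a) d) :
    ContOrientation (O + a) := fun e =>
  Set.ordConnected_Icc.add_mem_of_mul_nonneg (hO e) (by simpa using hOd e) (ha.mul_nonneg hda e)

lemma compatC_neg_of_signConformal (hOd : ContOrientation (O + d)) (hC : SignConformal C d) :
    CompatC (-C) O := by
  intro e he
  have hCe : C e ≠ 0 := by simpa using he
  have hCd := hC e hCe
  have := hOd e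
  simp only [Pi.neg_apply, Real.sign_neg, neg_neg, Pi.add_apply, Set.mem_Icc] at this ⊢
  rcases hCe.lt_or_gt with h | h
  · rw [Real.sign_of_neg h]; nlinarith
  · rw [Real.sign_of_pos h]; nlinarith

lemma eventually_contOrientation_sub_smul (hO : ContOrientation O) (hC : CompatC C O) :
    ∀ᶠ ε in 𝓝[>] (0 : ℝ), ContOrientation (O - ε • C) :=
  eventually_all.2 fun e => by simpa using eventually_sub_mul_mem_Icc (hO e) (hC e)

end Orientation

section Equivalence

variable {r m : ℕ} {A : Matrix (Fin r) (Fin m) ℝ} {O O' : Fin m → ℝ}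

lemma ContEquiv.mulVec_eq (h : ContEquiv A O O') : A *ᵥ O = A *ᵥ O' := by
  have heqv : Equivalence fun O O' : Fin m → ℝ => A *ᵥ O = A *ᵥ O' :=
    ⟨fun _ => rfl, Eq.symm, Eq.trans⟩
  refine heqv.eqvGen_iff.1 (Relation.EqvGen.mono ?_ _ _ h)
  rintro O _ ⟨C, ε, hC, -, -, rfl, -⟩
  simp [Matrix.mulVec_sub, Matrix.mulVec_smul, hC.2.1]

lemma contEquiv_add_of_mulVec_eq_zero {d : Fin m → ℝ} (hAd : A *ᵥ d = 0)
    (hO : ContOrientation O) (hOd : ContOrientation (O + d)) : ContEquiv A O (O + d) := by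
  induction hn : (Function.support d).ncard using Nat.strong_induction_on generalizing O d with
  | _ n ih =>
  by_cases hd : d = 0
  · rw [hd, add_zero]
    exact .refl O
  obtain ⟨C, hC, hCd⟩ := exists_isCircuitR_signConformal hd hAd
  obtain ⟨e, he⟩ := Function.ne_iff.1 hC.1
  obtain ⟨t, ht, hconf, hss⟩ := exists_sub_smul_signConformal hCd.support_subset ⟨e, hCd e he⟩
  have hO₁ : ContOrientation (O + t • C) := hO.add_of_signConformal hOd (hCd.smul ht) hconf
  have hrev : ContReversal A O (O + t • C) :=
    ⟨-C, t, hC.neg, ht, compatC_neg_of_signConformal hOd hCd, by simp [sub_eq_add_neg], hO₁⟩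
  have hrest := ih _ (hn ▸ Set.ncard_lt_ncard hss) (d := d - t • C)
    (by simp [Matrix.mulVec_sub, Matrix.mulVec_smul, hAd, hC.2.1]) hO₁ (by simpa using hOd) rfl
  rw [add_add_sub_cancel] at hrest
  exact .trans _ _ _ (.rel _ _ hrev) hrest

lemma contEquiv_iff_mulVec_eq (hO : ContOrientation O) (hO' : ContOrientation O') :
    ContEquiv A O O' ↔ A *ᵥ O = A *ᵥ O' := by
  refine ⟨ContEquiv.mulVec_eq, fun h => ?_⟩
  simpa using contEquiv_add_of_mulVec_eq_zero (d := O' - O) (by simp [Matrix.mulVec_sub, h]) hO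
    (by simpa using hO')

end Equivalence

section SigmaCompat

variable {r m : ℕ} {A : Matrix (Fin r) (Fin m) ℝ} {w O : Fin m → ℝ}

lemma isCompact_contOrientation_fiber (A : Matrix (Fin r) (Fin m) ℝ) (O : Fin m → ℝ) :
    IsCompact {x | ContOrientation x ∧ A *ᵥ x = A *ᵥ O} := by
  have : {x | ContOrientation x ∧ A *ᵥ x = A *ᵥ O} =
      Set.univ.pi (fun _ => Set.Icc (-1) 1) ∩ {x | A *ᵥ x = A *ᵥ O} := by
    ext; simp only [ContOrientation, Set.mem_ofPred_eq, Set.mem_inter_iff, Set.mem_univ_pi]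
  rw [this]
  exact (isCompact_univ_pi fun _ => isCompact_Icc).inter_right
    (isClosed_eq (continuous_const.matrix_mulVec continuous_id) continuous_const)

lemma sigmaCompat_of_isMaxOn (hw : ∀ C, IsCircuitR A C → w ⬝ᵥ C ≠ 0) (hO : ContOrientation O)
    (hmax : IsMaxOn (w ⬝ᵥ ·) {x | ContOrientation x ∧ A *ᵥ x = A *ᵥ O} O) :
    SigmaCompat A w O := by
  intro C hC hcomp
  obtain ⟨ε, hOε, hε : 0 < ε⟩ :=
    ((eventually_contOrientation_sub_smul hO hcomp).and self_mem_nhdsWithin).exists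
  have hle : w ⬝ᵥ (O - ε • C) ≤ w ⬝ᵥ O :=
    hmax ⟨hOε, by simp [Matrix.mulVec_sub, Matrix.mulVec_smul, hC.2.1]⟩
  simp only [dotProduct_sub, dotProduct_smul, smul_eq_mul, sub_le_self_iff] at hle
  exact (nonneg_of_mul_nonneg_right hle hε).lt_of_ne (hw C hC).symm

lemma eq_of_sigmaCompat {O₁ O₂ : Fin m → ℝ} (h₁ : ContOrientation O₁) (h₂ : ContOrientation O₂)
    (hσ₁ : SigmaCompat A w O₁) (hσ₂ : SigmaCompat A w O₂) (h : A *ᵥ O₁ = A *ᵥ O₂) : O₁ = O₂ := by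
  by_contra hne
  obtain ⟨C, hC, hCd⟩ := exists_isCircuitR_signConformal (sub_ne_zero.2 (Ne.symm hne))
    (by simp [Matrix.mulVec_sub, h] : A *ᵥ (O₂ - O₁) = 0)
  have hpos₁ := hσ₁ (-C) hC.neg (compatC_neg_of_signConformal (by simpa using h₂) hCd)
  have hpos₂ := hσ₂ C hC (neg_neg C ▸ compatC_neg_of_signConformal (d := O₁ - O₂)
    (by simpa using h₁) (by simpa using hCd.neg))
  rw [dotProduct_neg] at hpos₁
  linarith

end SigmaCompat

theorem stmt3_general {r m : ℕ} (A : Matrix (Fin r) (Fin m) ℝ)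
    (w : Fin m → ℝ) (hw : ∀ C : Fin m → ℝ, IsCircuitR A C → w ⬝ᵥ C ≠ 0)
    (O : Fin m → ℝ) (hO : ContOrientation O) :
    ∃! O' : Fin m → ℝ, ContOrientation O' ∧ SigmaCompat A w O' ∧ ContEquiv A O O' := by
  obtain ⟨O₀, ⟨hO₀, hAO₀⟩, hmax⟩ := (isCompact_contOrientation_fiber A O).exists_isMaxOn
    ⟨O, hO, rfl⟩ (continuous_const.dotProduct continuous_id).continuousOn
  have hσ : SigmaCompat A w O₀ := sigmaCompat_of_isMaxOn hw hO₀ (by rwa [hAO₀])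
  refine ⟨O₀, ⟨hO₀, hσ, (contEquiv_iff_mulVec_eq hO hO₀).2 hAO₀.symm⟩, ?_⟩
  rintro O' ⟨hO', hσ', hequiv⟩
  exact eq_of_sigmaCompat hO' hO₀ hσ' hσ (hequiv.mulVec_eq.symm.trans hAO₀.symm)

/-- Every continuous circuit-reversal equivalence class of continuous orientations
contains exactly one σ-compatible continuous orientation. -/
theorem stmt3 {r m : ℕ} (A : Matrix (Fin r) (Fin m) ℝ) (hrank : A.rank = r)
    (w : Fin m → ℝ) (hw : ∀ C : Fin m → ℝ, IsCircuitR A C → w ⬝ᵥ C ≠ 0)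
    (O : Fin m → ℝ) (hO : ContOrientation O) :
    ∃! O' : Fin m → ℝ, ContOrientation O' ∧ SigmaCompat A w O' ∧ ContEquiv A O O' :=
  stmt3_general A w hw O hO
end

section
/- The r-dimensional Lebesgue volume of the zonotope Z_A equals the number of bases of A, i.e., vol(Z_A) = |{B ⊆ E : |B| = r and the columns {A_e : e ∈ B} form a basis of ℝ^r}|. (Equivalently, vol(Z_A) = T_M(1,1), the number of bases of the regular matroid M.) -/
/-!
Induct on the number of columns, by deletion and contraction of the last column `v`. If `v = 0`
it changes neither the zonotope nor the bases. Otherwise total unimodularity gives a pivot entry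
`v i = ±1`, and a row operation of determinant `±1` (which preserves volume and bases) turns
`v` into the unit vector `e_i`. Then `Z_A = Z_{A∖v} + [0, 1] e_i`: each line parallel to `e_i`
meets `Z_{A∖v}` in a segment, lengthened by exactly `1`, so the volume grows by the volume of the
projection of `Z_{A∖v}` along `e_i`, which is the zonotope of the contraction `A/v`. On the other
side, bases avoiding `v` are bases of `A∖v`, and bases containing `v` correspond to bases of
`A/v`. The contraction is again totally unimodular, since its minors are, up to the sign of the
pivot, minors of `A` (Schur complement).
-/

open Matrix MeasureTheory Set Pointwise

noncomputable section

theorem linearIndepOn_insert_iff_comp_of_ker_eq_span {K V V' ι : Type*} [Field K]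
    [AddCommGroup V] [Module K V] [AddCommGroup V'] [Module K V'] (f : V →ₗ[K] V')
    {v : ι → V} {s : Set ι} {a : ι} (has : a ∉ s) (ha : v a ≠ 0)
    (hker : LinearMap.ker f = K ∙ v a) :
    LinearIndepOn K v (insert a s) ↔ LinearIndepOn K (f ∘ v) s := by
  rw [linearIndepOn_insert has, ← Submodule.disjoint_span_singleton' ha, ← hker, image_eq_range]
  exact ⟨fun ⟨hv, hdisj⟩ => LinearIndependent.map hv hdisj,
    fun h => ⟨h.of_comp f, Submodule.range_ker_disjoint h⟩⟩

theorem LinearMap.ker_funLeft_succAbove (K : Type*) [Field K] {s : ℕ} (i : Fin (s + 1)) :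
    LinearMap.ker (LinearMap.funLeft K K i.succAbove) = K ∙ Pi.single i 1 := by
  ext x
  rw [LinearMap.mem_ker, Submodule.mem_span_singleton]
  constructor
  · intro hx
    refine ⟨x i, funext fun j => ?_⟩
    rcases eq_or_ne j i with rfl | hj
    · simp
    · obtain ⟨j, rfl⟩ := Fin.exists_succAbove_eq hj
      simpa [Fin.succAbove_ne] using (congrFun hx j).symm
  · rintro ⟨c, rfl⟩
    funext j
    simp [LinearMap.funLeft, Fin.succAbove_ne]

theorem Fin.exists_map_castSuccEmb_eq {k : ℕ} {B : Finset (Fin (k + 1))} (h : Fin.last k ∉ B) :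
    ∃ B' : Finset (Fin k), B'.map Fin.castSuccEmb = B := by
  obtain ⟨B', -, hB'⟩ := (Finset.subset_map_iff (t := Finset.univ) (f := Fin.castSuccEmb)).1
    fun x hx => by
      obtain ⟨y, rfl⟩ := Fin.exists_castSucc_eq.2 (ne_of_mem_of_not_mem hx h)
      simp
  exact ⟨B', hB'.symm⟩

theorem Real.volume_add_Icc_zero_one {I : Set ℝ} (hI : IsCompact I) (hIc : Convex ℝ I)
    (hne : I.Nonempty) : volume (I + Icc 0 1) = volume I + 1 := by
  obtain ⟨a, b, hab, rfl⟩ : ∃ a b, a ≤ b ∧ I = Icc a b :=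
    ⟨_, _, csInf_le_csSup hne hI.bddBelow hI.bddAbove,
      eq_Icc_of_connected_compact ⟨hne, hIc.isPreconnected⟩ hI⟩
  rw [Icc_add_Icc hab zero_le_one, add_zero, Real.volume_Icc, Real.volume_Icc,
    ← ENNReal.ofReal_one, ← ENNReal.ofReal_add (sub_nonneg.2 hab) zero_le_one]
  ring_nf

/-- Every nonempty fibre `{u | (u, y) ∈ K}` is a segment, lengthened by exactly `1`. -/
theorem MeasureTheory.Measure.prod_add_Icc_prod_zero {E : Type*} [NormedAddCommGroup E]
    [NormedSpace ℝ E] [MeasurableSpace E] [BorelSpace E] [SecondCountableTopology E]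
    (μ : Measure E) [SFinite μ] {K : Set (ℝ × E)} (hK : IsCompact K) (hKc : Convex ℝ K) :
    volume.prod μ (K + Icc 0 1 ×ˢ {0}) = volume.prod μ K + μ (Prod.snd '' K) := by
  have hfiber_add (y : E) :
      (·, y) ⁻¹' (K + Icc 0 1 ×ˢ {0}) = (·, y) ⁻¹' K + Icc 0 1 := by
    ext u
    simp only [mem_preimage, mem_add, mem_prod, mem_singleton_iff, Prod.exists, Prod.mk_add_mk,
      Prod.mk.injEq]
    constructor
    · rintro ⟨v, z, hvz, t, _, ⟨ht, rfl⟩, rfl, rfl⟩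
      exact ⟨v, by simpa using hvz, t, ht, rfl⟩
    · rintro ⟨v, hv, t, ht, rfl⟩
      exact ⟨v, y, hv, t, 0, ⟨ht, rfl⟩, rfl, add_zero y⟩
  have hfiber (y : E) :
      volume ((·, y) ⁻¹' (K + Icc 0 1 ×ˢ {0}))
        = volume ((·, y) ⁻¹' K) + (Prod.snd '' K).indicator 1 y := by
    rw [hfiber_add]
    by_cases hne : ((·, y) ⁻¹' K).Nonempty
    · have hy : y ∈ Prod.snd '' K := let ⟨u, hu⟩ := hne; ⟨(u, y), hu, rfl⟩
      have hcompact : IsCompact ((·, y) ⁻¹' K) :=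
        (hK.image continuous_fst).of_isClosed_subset (hK.isClosed.preimage (by fun_prop))
          fun u hu => ⟨_, hu, rfl⟩
      have hconvex : Convex ℝ ((·, y) ⁻¹' K) := fun u hu v hv a b ha hb hab => by
        simpa [Prod.smul_mk, Prod.mk_add_mk, ← add_smul, hab] using hKc hu hv ha hb hab
      rw [Real.volume_add_Icc_zero_one hcompact hconvex hne, indicator_of_mem hy, Pi.one_apply]
    · have hy : y ∉ Prod.snd '' K := fun ⟨p, hp, hpy⟩ =>
        hne ⟨p.1, by simpa [← hpy] using hp⟩
      rw [not_nonempty_iff_eq_empty.1 hne, empty_add, indicator_of_notMem hy, add_zero]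
  have hKm : MeasurableSet K := hK.measurableSet
  rw [Measure.prod_apply_symm hKm,
    Measure.prod_apply_symm (hK.add (isCompact_Icc.prod isCompact_singleton)).measurableSet,
    ← lintegral_indicator_one (hK.image continuous_snd).measurableSet,
    ← lintegral_add_left (measurable_measure_prodMk_right hKm)]
  exact lintegral_congr hfiber

namespace Matrix

theorem IsTotallyUnimodular.map {m n R S : Type*} [CommRing R] [CommRing S] {A : Matrix m n R}
    (hA : A.IsTotallyUnimodular) (f : R →+* S) : (A.map f).IsTotallyUnimodular := by
  rw [isTotallyUnimodular_iff] at hA ⊢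
  intro k g h
  obtain ⟨s, hs⟩ := hA k g h
  exact ⟨s, by rw [submatrix_map, ← RingHom.mapMatrix_apply, ← RingHom.map_det, ← hs,
    SignType.map_cast]⟩

theorem col_mul {R m n : Type*} [Semiring R] [Fintype m] (L : Matrix m m R) (A : Matrix m n R)
    (k : n) : (L * A).col k = L *ᵥ A.col k := by
  ext i
  simp [mul_apply, mulVec, dotProduct]

section Pivot

variable {K : Type*} [Field K] {s : ℕ}

/-- Gaussian elimination on the column `v` with pivot row `i`. -/
def pivotMatrix (v : Fin (s + 1) → K) (i : Fin (s + 1)) : Matrix (Fin (s + 1)) (Fin (s + 1)) K :=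
  1 + replicateCol Unit ((v i)⁻¹ • (Pi.single i 1 - v))
    * replicateRow Unit (Pi.single i (1 : K))

theorem pivotMatrix_mulVec (v : Fin (s + 1) → K) (i : Fin (s + 1)) (z : Fin (s + 1) → K) :
    pivotMatrix v i *ᵥ z = z + z i • (v i)⁻¹ • (Pi.single i 1 - v) := by
  rw [pivotMatrix, add_mulVec, one_mulVec, ← mulVec_mulVec, replicateRow_mulVec_eq_const,
    single_dotProduct, one_mul]
  ext j
  simp [mulVec, dotProduct, mul_comm]

theorem pivotMatrix_mulVec_self (v : Fin (s + 1) → K) (i : Fin (s + 1)) (hv : v i ≠ 0) :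
    pivotMatrix v i *ᵥ v = Pi.single i 1 := by
  rw [pivotMatrix_mulVec, smul_smul, mul_inv_cancel₀ hv, one_smul, add_sub_cancel]

theorem det_pivotMatrix (v : Fin (s + 1) → K) (i : Fin (s + 1)) (hv : v i ≠ 0) :
    (pivotMatrix v i).det = (v i)⁻¹ := by
  rw [pivotMatrix, det_one_add_replicateCol_mul_replicateRow, single_dotProduct, one_mul]
  simp [mul_sub, hv]

theorem pivotMatrix_mul_apply_succAbove {n : Type*} (v : Fin (s + 1) → K) (i : Fin (s + 1))
    (A : Matrix (Fin (s + 1)) n K) (j : Fin s) (k : n) :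
    (pivotMatrix v i * A) (i.succAbove j) k
      = A (i.succAbove j) k - v (i.succAbove j) * (v i)⁻¹ * A i k := by
  change (pivotMatrix v i * A).col k (i.succAbove j) = _
  rw [col_mul, pivotMatrix_mulVec]
  simp [Fin.succAbove_ne]
  ring

/-- The Schur complement formula for the pivot `A i c`. -/
theorem det_submatrix_sumElim_eq {n ι : Type*} [Fintype ι] [DecidableEq ι]
    (A : Matrix (Fin (s + 1)) n K) (i : Fin (s + 1)) (c : n) (ha : A i c ≠ 0)
    (f : ι → Fin s) (g : ι → n) :
    (A.submatrix (Sum.elim (fun _ : Unit => i) (i.succAbove ∘ f))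
        (Sum.elim (fun _ : Unit => c) g)).det
      = A i c * ((pivotMatrix (A.col c) i * A).submatrix (i.succAbove ∘ f) g).det := by
  let P : Matrix Unit Unit K := of fun _ _ => A i c
  let _ : Invertible P :=
    ⟨of fun _ _ => (A i c)⁻¹, by ext; simp [P, mul_apply, ha],
      by ext; simp [P, mul_apply, ha]⟩
  have hblocks : A.submatrix (Sum.elim (fun _ : Unit => i) (i.succAbove ∘ f))
        (Sum.elim (fun _ : Unit => c) g) =
      fromBlocks P (of fun _ j => A i (g j)) (of fun j _ => A (i.succAbove (f j)) c)
        (of fun j k => A (i.succAbove (f j)) (g k)) := by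
    ext (_ | j) (_ | k) <;> rfl
  rw [hblocks, det_fromBlocks₁₁]
  congr 1
  · simp [P]
  · congr 1
    ext j k
    rw [submatrix_apply, Function.comp_apply, pivotMatrix_mul_apply_succAbove]
    simp [P, mul_apply]

theorem IsTotallyUnimodular.pivotMatrix_mul_submatrix_succAbove {n : Type*}
    {A : Matrix (Fin (s + 1)) n K} (hA : A.IsTotallyUnimodular) {i : Fin (s + 1)} {c : n}
    (ha : A i c ≠ 0) :
    ((pivotMatrix (A.col c) i * A).submatrix i.succAbove id).IsTotallyUnimodular := by
  rw [isTotallyUnimodular_iff]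
  intro k f g
  obtain ⟨σ, hσ⟩ := hA.apply i c
  obtain ⟨τ, hτ⟩ := (isTotallyUnimodular_iff_fintype.{0} A).1 hA (Unit ⊕ Fin k)
    (Sum.elim (fun _ => i) (i.succAbove ∘ f)) (Sum.elim (fun _ => c) g)
  rw [det_submatrix_sumElim_eq A i c ha] at hτ
  have hσσ : (σ : K) * σ = 1 := by
    cases σ
    · exact absurd hσ.symm (by simpa using ha)
    all_goals simp
  refine ⟨σ * τ, ?_⟩
  rw [SignType.coe_mul, hτ, ← hσ, ← mul_assoc, hσσ, one_mul]
  rfl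

end Pivot

/-- The contraction of the last column of `A`, represented after pivoting on row `i`. -/
def contractLast {K : Type*} [Field K] {s k : ℕ} (A : Matrix (Fin (s + 1)) (Fin (k + 1)) K)
    (i : Fin (s + 1)) : Matrix (Fin s) (Fin k) K :=
  (pivotMatrix (A.col (Fin.last k)) i * A).submatrix i.succAbove Fin.castSucc

theorem IsTotallyUnimodular.contractLast {K : Type*} [Field K] {s k : ℕ}
    {A : Matrix (Fin (s + 1)) (Fin (k + 1)) K} (hA : A.IsTotallyUnimodular) {i : Fin (s + 1)}
    (ha : A i (Fin.last k) ≠ 0) : (A.contractLast i).IsTotallyUnimodular :=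
  (hA.pivotMatrix_mul_submatrix_succAbove ha).submatrix id Fin.castSucc

section Zonotope

variable {n ι : Type*} [Fintype ι]

def zonotope (A : Matrix n ι ℝ) : Set (n → ℝ) := A.mulVec '' Icc 0 1

theorem zonotope_mul [Fintype n] (L : Matrix n n ℝ) (A : Matrix n ι ℝ) :
    (L * A).zonotope = L.mulVec '' A.zonotope := by
  rw [zonotope, zonotope, image_image]
  simp only [mulVec_mulVec]

theorem volume_zonotope_mul [Fintype n] [DecidableEq n] (L : Matrix n n ℝ) (A : Matrix n ι ℝ) :
    volume (L * A).zonotope = ENNReal.ofReal |L.det| * volume A.zonotope := by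
  rw [zonotope_mul, ← coe_mulVecLin, ← toLin'_apply', Measure.addHaar_image_linearMap,
    LinearMap.det_toLin']

theorem isCompact_zonotope (A : Matrix n ι ℝ) : IsCompact A.zonotope :=
  isCompact_Icc.image (Continuous.matrix_mulVec continuous_const continuous_id)

theorem convex_zonotope (A : Matrix n ι ℝ) : Convex ℝ A.zonotope :=
  (convex_Icc 0 1).linear_image A.mulVecLin

theorem zonotope_of_isEmpty [IsEmpty ι] (A : Matrix n ι ℝ) : A.zonotope = {0} := by
  rw [zonotope, show A.mulVec = fun _ => 0 from funext fun x => by ext; simp [mulVec, dotProduct],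
    (nonempty_Icc.2 zero_le_one).image_const]

theorem zonotope_succ {k : ℕ} (A : Matrix n (Fin (k + 1)) ℝ) :
    A.zonotope = (A.submatrix id Fin.castSucc).zonotope
      + (fun t : ℝ => t • A.col (Fin.last k)) '' Icc 0 1 := by
  have hsplit (x : Fin (k + 1) → ℝ) : A *ᵥ x
      = A.submatrix id Fin.castSucc *ᵥ Fin.init x + x (Fin.last k) • A.col (Fin.last k) := by
    ext i
    simp [mulVec, dotProduct, Fin.sum_univ_castSucc, Fin.init, mul_comm]
  ext z
  simp only [zonotope, ← pi_univ_Icc, mem_image, mem_add, mem_univ_pi]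
  constructor
  · rintro ⟨x, hx, rfl⟩
    exact ⟨_, ⟨Fin.init x, fun i => hx _, rfl⟩, _, ⟨x (Fin.last k), hx _, rfl⟩,
      (hsplit x).symm⟩
  · rintro ⟨_, ⟨y, hy, rfl⟩, _, ⟨t, ht, rfl⟩, rfl⟩
    refine ⟨Fin.snoc y t, fun i => ?_, by simp [hsplit]⟩
    induction i using Fin.lastCases <;> simp_all

theorem zonotope_succ_of_col_last_eq_zero {k : ℕ} {A : Matrix n (Fin (k + 1)) ℝ}
    (h : A.col (Fin.last k) = 0) : A.zonotope = (A.submatrix id Fin.castSucc).zonotope := by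
  rw [zonotope_succ A, h]
  simp_rw [smul_zero]
  rw [(nonempty_Icc.2 (zero_le_one' ℝ)).image_const, singleton_zero, add_zero]

theorem volume_zonotope_of_col_last_eq_single {s k : ℕ}
    (N : Matrix (Fin (s + 1)) (Fin (k + 1)) ℝ) (i : Fin (s + 1))
    (hN : N.col (Fin.last k) = Pi.single i 1) :
    volume N.zonotope = volume (N.submatrix id Fin.castSucc).zonotope
      + volume (N.submatrix i.succAbove Fin.castSucc).zonotope := by
  let e := MeasurableEquiv.piFinSuccAbove (fun _ : Fin (s + 1) => ℝ) i
  let φ : (Fin (s + 1) → ℝ) →ₗ[ℝ] ℝ × (Fin s → ℝ) :=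
    (LinearMap.proj i).prod (LinearMap.funLeft ℝ ℝ i.succAbove)
  have hφ : ⇑φ = ⇑e := rfl
  have hvol (S : Set (Fin (s + 1) → ℝ)) : volume (φ '' S) = volume S := by
    rw [hφ, e.image_eq_preimage_symm,
      (volume_preserving_piFinSuccAbove (fun _ => ℝ) i).symm.measure_preimage_equiv]
  have hseg : (fun t : ℝ => φ (t • Pi.single i 1)) = (·, 0) := by
    funext t
    ext j
    · simp [φ]
    · simp [φ, Fin.succAbove_ne]
  have himage : φ '' N.zonotope
      = φ '' (N.submatrix id Fin.castSucc).zonotope + Icc 0 1 ×ˢ {0} := by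
    rw [zonotope_succ, hN, image_add φ, image_image, hseg, prod_singleton]
  have hrows : (fun x => (φ (N.submatrix id Fin.castSucc *ᵥ x)).2)
      = (N.submatrix i.succAbove Fin.castSucc).mulVec := by
    funext x
    ext j
    simp [φ, mulVec, dotProduct]
  have hsnd : Prod.snd '' (φ '' (N.submatrix id Fin.castSucc).zonotope)
      = (N.submatrix i.succAbove Fin.castSucc).zonotope := by
    rw [zonotope, zonotope, image_image, image_image, hrows]
  rw [← hvol, himage, ← hvol (N.submatrix id Fin.castSucc).zonotope, ← hsnd,
    Measure.volume_eq_prod, Measure.prod_add_Icc_prod_zero _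
      ((isCompact_zonotope _).image φ.continuous_of_finiteDimensional)
      ((convex_zonotope _).linear_image φ)]

theorem volume_zonotope_succ_of_pivot {s k : ℕ} (A : Matrix (Fin (s + 1)) (Fin (k + 1)) ℝ)
    (i : Fin (s + 1)) (ha : |A i (Fin.last k)| = 1) :
    volume A.zonotope = volume (A.submatrix id Fin.castSucc).zonotope
      + volume (A.contractLast i).zonotope := by
  have ha0 : A i (Fin.last k) ≠ 0 := fun h => by simp [h] at ha
  set L := pivotMatrix (A.col (Fin.last k)) i
  have hL : ENNReal.ofReal |L.det| = 1 := by
    rw [det_pivotMatrix _ i ha0, abs_inv, col_apply, ha, inv_one, ENNReal.ofReal_one]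
  rw [← one_mul (volume A.zonotope), ← hL, ← volume_zonotope_mul,
    volume_zonotope_of_col_last_eq_single (L * A) i
      (by rw [col_mul, pivotMatrix_mulVec_self _ i ha0]),
    show (L * A).submatrix id Fin.castSucc = L * A.submatrix id Fin.castSucc from rfl,
    volume_zonotope_mul, hL, one_mul]
  rfl

end Zonotope

section Bases

variable {K ι : Type*} [Field K] {r k : ℕ}

def bases (A : Matrix (Fin r) ι K) : Set (Finset ι) :=
  {B | B.card = r ∧ LinearIndepOn K A.col B}

theorem mem_bases {A : Matrix (Fin r) ι K} {B : Finset ι} :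
    B ∈ A.bases ↔ B.card = r ∧ LinearIndepOn K A.col B :=
  Iff.rfl

theorem bases_mul [Fintype ι] (L : Matrix (Fin r) (Fin r) K) (hL : IsUnit L.det)
    (A : Matrix (Fin r) ι K) : (L * A).bases = A.bases := by
  have hcol : (L * A).col = L.mulVecLin ∘ A.col := funext (col_mul L A)
  ext B
  rw [mem_bases, mem_bases, hcol, L.mulVecLin.linearIndepOn_iff_of_injOn
    ((mulVec_injective_iff_isUnit.2 ((isUnit_iff_isUnit_det L).2 hL)).injOn)]

theorem map_castSuccEmb_mem_bases_iff (A : Matrix (Fin r) (Fin (k + 1)) K) (B : Finset (Fin k)) :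
    B.map Fin.castSuccEmb ∈ A.bases ↔ B ∈ (A.submatrix id Fin.castSucc).bases := by
  rw [mem_bases, mem_bases, Finset.card_map, Finset.coe_map]
  exact and_congr_right fun _ =>
    ⟨fun h => h.comp_of_image Fin.castSuccEmb.injective.injOn,
      fun h => LinearIndepOn.image_of_comp Fin.castSuccEmb A.col h⟩

theorem insert_last_mem_bases_iff {s : ℕ} (N : Matrix (Fin (s + 1)) (Fin (k + 1)) K)
    (i : Fin (s + 1)) (hN : N.col (Fin.last k) = Pi.single i 1) (B : Finset (Fin k)) :
    insert (Fin.last k) (B.map Fin.castSuccEmb) ∈ N.bases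
      ↔ B ∈ (N.submatrix i.succAbove Fin.castSucc).bases := by
  have hlast : Fin.last k ∉ B.map Fin.castSuccEmb := by simp [Fin.castSucc_ne_last]
  rw [mem_bases, mem_bases, Finset.card_insert_of_notMem hlast, Finset.card_map, add_left_inj,
    Finset.coe_insert,
    linearIndepOn_insert_iff_comp_of_ker_eq_span (LinearMap.funLeft K K i.succAbove)
      (by simpa only [Finset.mem_coe] using hlast) (by simp [hN])
      (by rw [hN, LinearMap.ker_funLeft_succAbove]), Finset.coe_map]
  exact and_congr_right fun _ =>
    ⟨fun h => h.comp_of_image Fin.castSuccEmb.injective.injOn, fun h =>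
      LinearIndepOn.image_of_comp Fin.castSuccEmb (LinearMap.funLeft K K i.succAbove ∘ N.col) h⟩

theorem ncard_bases_succ (A : Matrix (Fin r) (Fin (k + 1)) K) :
    A.bases.ncard = (A.submatrix id Fin.castSucc).bases.ncard
      + {B : Finset (Fin k) | insert (Fin.last k) (B.map Fin.castSuccEmb) ∈ A.bases}.ncard := by
  have hlast (B : Finset (Fin k)) : Fin.last k ∉ B.map Fin.castSuccEmb := by
    simp [Fin.castSucc_ne_last]
  have hinsert_inj : Function.Injective
      fun B : Finset (Fin k) => insert (Fin.last k) (B.map Fin.castSuccEmb) := fun B B' h => by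
    simpa [Finset.erase_insert (hlast _)] using congrArg (Finset.erase · (Fin.last k)) h
  have hdecomp : A.bases = Finset.map Fin.castSuccEmb '' (A.submatrix id Fin.castSucc).bases
      ∪ (fun B : Finset (Fin k) => insert (Fin.last k) (B.map Fin.castSuccEmb)) ''
        {B | insert (Fin.last k) (B.map Fin.castSuccEmb) ∈ A.bases} := by
    ext B
    constructor
    · intro hB
      by_cases hl : Fin.last k ∈ B
      · obtain ⟨B', hB'⟩ := Fin.exists_map_castSuccEmb_eq (Finset.notMem_erase (Fin.last k) B)
        have hB_eq : insert (Fin.last k) (B'.map Fin.castSuccEmb) = B := by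
          rw [hB', Finset.insert_erase hl]
        exact Or.inr ⟨B', by rwa [mem_ofPred_eq, hB_eq], hB_eq⟩
      · obtain ⟨B', rfl⟩ := Fin.exists_map_castSuccEmb_eq hl
        exact Or.inl ⟨B', (map_castSuccEmb_mem_bases_iff A B').1 hB, rfl⟩
    · rintro (⟨B', hB', rfl⟩ | ⟨B', hB', rfl⟩)
      · exact (map_castSuccEmb_mem_bases_iff A B').2 hB'
      · exact hB'
  have hdisj : Disjoint (Finset.map Fin.castSuccEmb '' (A.submatrix id Fin.castSucc).bases)
      ((fun B : Finset (Fin k) => insert (Fin.last k) (B.map Fin.castSuccEmb)) ''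
        {B | insert (Fin.last k) (B.map Fin.castSuccEmb) ∈ A.bases}) := by
    rw [disjoint_left]
    rintro _ ⟨B', -, rfl⟩ ⟨B'', -, h⟩
    exact hlast B' (h ▸ Finset.mem_insert_self _ _)
  conv_lhs => rw [hdecomp]
  rw [ncard_union_eq hdisj (toFinite _) (toFinite _),
    ncard_image_of_injective _ (Finset.map_injective _), ncard_image_of_injective _ hinsert_inj]

theorem ncard_bases_succ_of_col_last_eq_zero {A : Matrix (Fin r) (Fin (k + 1)) K}
    (h : A.col (Fin.last k) = 0) :
    A.bases.ncard = (A.submatrix id Fin.castSucc).bases.ncard := by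
  rw [ncard_bases_succ, add_eq_left, ncard_eq_zero, eq_empty_iff_forall_notMem]
  intro B hB
  exact (hB.2.ne_zero (Finset.mem_insert_self _ _)) h

theorem ncard_bases_succ_of_pivot {s : ℕ} (A : Matrix (Fin (s + 1)) (Fin (k + 1)) K)
    (i : Fin (s + 1)) (ha : A i (Fin.last k) ≠ 0) :
    A.bases.ncard = (A.submatrix id Fin.castSucc).bases.ncard + (A.contractLast i).bases.ncard := by
  set L := pivotMatrix (A.col (Fin.last k)) i
  have hL : IsUnit L.det := by
    rw [det_pivotMatrix _ i ha]
    exact (inv_ne_zero ha).isUnit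
  rw [← bases_mul L hL A, ncard_bases_succ,
    show (L * A).submatrix id Fin.castSucc = L * A.submatrix id Fin.castSucc from rfl,
    bases_mul L hL]
  congr 2
  ext B
  exact insert_last_mem_bases_iff (L * A) i (by rw [col_mul, pivotMatrix_mulVec_self _ i ha]) B

end Bases

theorem volume_zonotope_eq_ncard_bases_zero {r : ℕ} (A : Matrix (Fin r) (Fin 0) ℝ) :
    volume A.zonotope = A.bases.ncard := by
  rw [zonotope_of_isEmpty]
  cases r with
  | zero =>
    have hbases : A.bases = univ := eq_univ_of_forall fun B => by
      simp [Finset.eq_empty_of_isEmpty B, mem_bases]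
    rw [Subsingleton.eq_univ_of_nonempty (singleton_nonempty _), hbases, ncard_univ,
      Nat.card_unique, ← pi_univ, volume_pi_pi]
    simp
  | succ s =>
    have hbases : A.bases = ∅ := eq_empty_of_forall_notMem fun B hB => by
      simpa [Finset.eq_empty_of_isEmpty B] using hB.1
    rw [measure_singleton, hbases, ncard_empty, Nat.cast_zero]

theorem volume_zonotope_eq_ncard_bases {r m : ℕ} (A : Matrix (Fin r) (Fin m) ℝ)
    (hA : A.IsTotallyUnimodular) : volume A.zonotope = A.bases.ncard := by
  induction m generalizing r with
  | zero => exact volume_zonotope_eq_ncard_bases_zero A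
  | succ k ih =>
    by_cases hcol : A.col (Fin.last k) = 0
    · rw [zonotope_succ_of_col_last_eq_zero hcol, ncard_bases_succ_of_col_last_eq_zero hcol]
      exact ih _ (hA.submatrix _ _)
    obtain ⟨i, hi⟩ := Function.ne_iff.1 hcol
    cases r with
    | zero => exact i.elim0
    | succ s =>
      have ha : |A i (Fin.last k)| = 1 := by
        obtain ⟨σ, hσ⟩ := hA.apply i (Fin.last k)
        cases σ <;> simp [← hσ] at hi ⊢
      rw [volume_zonotope_succ_of_pivot A i ha, ncard_bases_succ_of_pivot A i hi, Nat.cast_add,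
        ih _ (hA.submatrix _ _), ih _ (hA.contractLast hi)]

end Matrix

end

theorem stmt11_general {r m : ℕ} (A : Matrix (Fin r) (Fin m) ℤ)
    (hTU : A.IsTotallyUnimodular) :
    MeasureTheory.volume {z : Fin r → ℝ | ∃ x : Fin m → ℝ,
        (∀ e, x e ∈ Set.Icc (0 : ℝ) 1) ∧ z = (A.map ((↑) : ℤ → ℝ)).mulVec x} =
    (Set.ncard {B : Finset (Fin m) | B.card = r ∧
        LinearIndependent ℝ (fun e : B => fun i => (A i (e : Fin m) : ℝ)) ∧
        Submodule.span ℝ (Set.range (fun e : B => fun i => (A i (e : Fin m) : ℝ))) = ⊤} :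
      ENNReal) := by
  have hzonotope : {z : Fin r → ℝ | ∃ x : Fin m → ℝ,
      (∀ e, x e ∈ Set.Icc (0 : ℝ) 1) ∧ z = (A.map ((↑) : ℤ → ℝ)).mulVec x}
      = (A.map ((↑) : ℤ → ℝ)).zonotope := by
    ext z
    simp [zonotope, Pi.le_def, forall_and, eq_comm]
  have hbases : {B : Finset (Fin m) | B.card = r ∧
      LinearIndependent ℝ (fun e : B => fun i => (A i (e : Fin m) : ℝ)) ∧
      Submodule.span ℝ (Set.range (fun e : B => fun i => (A i (e : Fin m) : ℝ))) = ⊤}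
      = (A.map ((↑) : ℤ → ℝ)).bases := by
    ext B
    exact ⟨fun ⟨hcard, hli, _⟩ => ⟨hcard, hli⟩, fun ⟨hcard, hli⟩ =>
      ⟨hcard, hli, hli.span_eq_top_of_card_eq_finrank' (by simpa using hcard)⟩⟩
  rw [hzonotope, hbases]
  exact volume_zonotope_eq_ncard_bases _ (hTU.map (Int.castRingHom ℝ))

/-- The volume of the unimodular zonotope `Z_A` equals the number of bases of `A`
(equivalently, `vol(Z_A) = T_M(1,1)`, the number of bases of the regular matroid `M`). -/
theorem stmt11 {r m : ℕ} (A : Matrix (Fin r) (Fin m) ℤ)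
    (hTU : A.IsTotallyUnimodular) (hrank : (A.map ((↑) : ℤ → ℝ)).rank = r) :
    MeasureTheory.volume {z : Fin r → ℝ | ∃ x : Fin m → ℝ,
        (∀ e, x e ∈ Set.Icc (0 : ℝ) 1) ∧ z = (A.map ((↑) : ℤ → ℝ)).mulVec x} =
    (Set.ncard {B : Finset (Fin m) | B.card = r ∧
        LinearIndependent ℝ (fun e : B => fun i => (A i (e : Fin m) : ℝ)) ∧
        Submodule.span ℝ (Set.range (fun e : B => fun i => (A i (e : Fin m) : ℝ))) = ⊤} :
      ENNReal) :=
  stmt11_general A hTU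
end

section
/- Every vector γ ∈ ℤ^E can be written as γ = γ₀ + u + v, where γ₀ ∈ ℤ^E has all coordinates in {−1, 0, 1}, u ∈ Λ_A, and v ∈ Λ*_A; in other words, every coset of ℤ^E/(Λ_A + Λ*_A) contains a representative whose coefficients are all 1, 0 or −1. -/
open Matrix

/-!
Over `ℝ`, `γ = p + q` with `A p = 0` and `q = Aᵀ y`. Total unimodularity makes the polytopes
`{u | A u = 0, ⌊p⌋ ≤ u ≤ ⌈p⌉}` and `{y' | ⌊q⌋ ≤ Aᵀ y' ≤ ⌈q⌉, ⌊y⌋ ≤ y' ≤ ⌈y⌉}` integral: an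
extreme point is cut out by a square subsystem of determinant `±1`, hence is an integer vector.
Taking integer points `u` and `y₀` of them, `γ - u - Aᵀ y₀ = (p - u) + (q - Aᵀ y₀)` is an integer
vector with entries in `(-2, 2)`.
-/

namespace Matrix

variable {ι κ : Type*} [Fintype κ]

theorem map_intCast_mulVec {R : Type*} [Ring R] (M : Matrix ι κ ℤ) (v : κ → ℤ) :
    M.map ((↑) : ℤ → R) *ᵥ (Int.cast ∘ v) = Int.cast ∘ (M *ᵥ v) :=
  funext fun i => (RingHom.map_mulVec (Int.castRingHom R) M v i).symm

def intervalPolyhedron (M : Matrix ι κ ℤ) (lo hi : ι → ℤ) : Set (κ → ℝ) :=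
  (M.map ((↑) : ℤ → ℝ) *ᵥ ·) ⁻¹' Set.Icc (Int.cast ∘ lo) (Int.cast ∘ hi)

def tightRows (M : Matrix ι κ ℤ) (lo hi : ι → ℤ) (x : κ → ℝ) : Set ι :=
  {i | (M.map ((↑) : ℤ → ℝ) *ᵥ x) i = lo i ∨ (M.map ((↑) : ℤ → ℝ) *ᵥ x) i = hi i}

theorem isCompact_intervalPolyhedron {M : Matrix ι κ ℤ}
    (hinj : Function.Injective (M.map ((↑) : ℤ → ℝ)).mulVec) (lo hi : ι → ℤ) :
    IsCompact (M.intervalPolyhedron lo hi) :=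
  (LinearMap.isClosedEmbedding_of_injective (f := (M.map ((↑) : ℤ → ℝ)).mulVecLin)
    (LinearMap.ker_eq_bot.mpr hinj)).isCompact_preimage isCompact_Icc

variable [Fintype ι]

theorem eventually_add_smul_mem_intervalPolyhedron {M : Matrix ι κ ℤ} {lo hi : ι → ℤ}
    {x : κ → ℝ} (hx : x ∈ M.intervalPolyhedron lo hi) {h : κ → ℝ}
    (hh : ∀ i ∈ M.tightRows lo hi x, (M.map ((↑) : ℤ → ℝ) *ᵥ h) i = 0) :
    ∀ᶠ t in nhds (0 : ℝ), x + t • h ∈ M.intervalPolyhedron lo hi := by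
  set Mx := M.map ((↑) : ℤ → ℝ) *ᵥ x
  set Mh := M.map ((↑) : ℤ → ℝ) *ᵥ h
  have hline : ∀ t : ℝ, M.map ((↑) : ℤ → ℝ) *ᵥ (x + t • h) = Mx + t • Mh := fun t => by
    rw [mulVec_add, mulVec_smul]
  simp only [intervalPolyhedron, Set.mem_preimage, hline, Set.mem_Icc, Pi.le_def,
    ← forall_and]
  refine Filter.eventually_all.2 fun i => ?_
  obtain ⟨hlo, hhi⟩ : (lo i : ℝ) ≤ Mx i ∧ Mx i ≤ hi i := ⟨hx.1 i, hx.2 i⟩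
  by_cases htight : i ∈ M.tightRows lo hi x
  · simp [hh i htight, hlo, hhi]
  obtain ⟨hne_lo, hne_hi⟩ := not_or.mp htight
  have hcont : Continuous fun t : ℝ => Mx i + t * Mh i := by fun_prop
  filter_upwards [hcont.tendsto' 0 _ (by simp) |>.eventually
    (Ioo_mem_nhds (hlo.lt_of_ne' hne_lo) (hhi.lt_of_ne hne_hi))] with t ht
  exact ⟨by simpa using ht.1.le, by simpa using ht.2.le⟩

theorem eq_zero_of_mem_extremePoints_intervalPolyhedron {M : Matrix ι κ ℤ} {lo hi : ι → ℤ}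
    {x : κ → ℝ} (hx : x ∈ (M.intervalPolyhedron lo hi).extremePoints ℝ) {h : κ → ℝ}
    (hh : ∀ i ∈ M.tightRows lo hi x, (M.map ((↑) : ℤ → ℝ) *ᵥ h) i = 0) :
    h = 0 := by
  have hneg : ∀ i ∈ M.tightRows lo hi x, (M.map ((↑) : ℤ → ℝ) *ᵥ -h) i = 0 := fun i hi => by
    simp [mulVec_neg, hh i hi]
  obtain ⟨t, ⟨hplus, hminus⟩, ht⟩ :=
    (((eventually_add_smul_mem_intervalPolyhedron hx.1 hh).and
      (eventually_add_smul_mem_intervalPolyhedron hx.1 hneg)).filter_mono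
        nhdsWithin_le_nhds |>.and (self_mem_nhdsWithin (s := Set.Ioi (0 : ℝ)))).exists
  rw [smul_neg, ← sub_eq_add_neg] at hminus
  have := ((mem_extremePoints.mp hx).2 _ hminus _ hplus (mem_openSegment_sub_add _ _)).1
  simpa [ht.ne'] using this

theorem exists_mulVec_sub_transpose_mulVec_eq_zero {R : Type*} [Field R] [LinearOrder R]
    [IsStrictOrderedRing R] (A : Matrix ι κ R) (w : κ → R) :
    ∃ y : ι → R, A *ᵥ (w - Aᵀ *ᵥ y) = 0 := by
  have hle : LinearMap.range (A * Aᵀ).mulVecLin ≤ LinearMap.range A.mulVecLin := by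
    rw [mulVecLin_mul]
    exact LinearMap.range_comp_le_range _ _
  have hrange := Submodule.eq_of_le_of_finrank_eq hle (rank_self_mul_transpose A)
  obtain ⟨y, hy⟩ : A *ᵥ w ∈ LinearMap.range (A * Aᵀ).mulVecLin := hrange ▸ ⟨w, rfl⟩
  refine ⟨y, ?_⟩
  rw [mulVec_sub, sub_eq_zero, ← hy, mulVecLin_apply, mulVec_mulVec]

variable [DecidableEq κ]

theorem exists_submatrix_det_ne_zero_of_mulVec_injective {K : Type*} [Field K]
    (R : Matrix ι κ K) (hR : Function.Injective R.mulVec) :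
    ∃ f : κ → ι, (R.submatrix f id).det ≠ 0 := by
  obtain ⟨τ, a, -, hspan, hli⟩ := exists_linearIndependent' K R.row
  have hrank : R.rank = Fintype.card κ := by
    rw [rank, LinearMap.finrank_range_of_inj hR, Module.finrank_fintype_fun_eq_card]
  have htop : Submodule.span K (Set.range (R.row ∘ a)) = ⊤ := by
    rw [hspan]
    refine Submodule.eq_top_of_finrank_eq ?_
    rw [← rank_eq_finrank_span_row, hrank, Module.finrank_fintype_fun_eq_card]
  let e : κ ≃ τ := (Pi.basisFun K κ).indexEquiv (Module.Basis.mk hli htop.ge)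
  refine ⟨a ∘ e, ?_⟩
  have hrows : LinearIndependent K (R.submatrix (a ∘ e) id).row := hli.comp e e.injective
  exact ((isUnit_iff_isUnit_det _).mp (linearIndependent_rows_iff_isUnit.mp hrows)).ne_zero

theorem IsTotallyUnimodular.exists_intCast_eq_of_mulVec_injective {N : Matrix ι κ ℤ}
    (hN : N.IsTotallyUnimodular) (hinj : Function.Injective (N.map ((↑) : ℤ → ℝ)).mulVec)
    {x : κ → ℝ} (hx : ∀ i, ∃ c : ℤ, (N.map ((↑) : ℤ → ℝ) *ᵥ x) i = c) :
    ∃ z : κ → ℤ, Int.cast ∘ z = x := by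
  choose c hc using hx
  obtain ⟨f, hf⟩ := exists_submatrix_det_ne_zero_of_mulVec_injective _ hinj
  set B := N.submatrix f id
  have hBdet : ((B.det : ℤ) : ℝ) ≠ 0 := by rwa [Int.cast_det]
  have hBunit : IsUnit B.det := by
    obtain ⟨s, hs⟩ := (isTotallyUnimodular_iff_fintype N).mp hN κ f id
    rw [← hs] at hBdet ⊢
    rcases s with _ | _ | _
    · simp at hBdet
    · simp
    · simp
  -- `B` is invertible over `ℤ`, so the unique real solution `x` of `B x = c ∘ f` is integral.
  have hBz : B *ᵥ (B⁻¹ *ᵥ (c ∘ f)) = c ∘ f := by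
    rw [mulVec_mulVec, mul_nonsing_inv _ hBunit, one_mulVec]
  refine ⟨B⁻¹ *ᵥ (c ∘ f), mulVec_injective_of_det_ne_zero hf ?_⟩
  ext j
  change (N.map ((↑) : ℤ → ℝ) *ᵥ _) (f j) = (N.map ((↑) : ℤ → ℝ) *ᵥ x) (f j)
  rw [hc, map_intCast_mulVec]
  exact congrArg Int.cast (congrFun hBz j)

theorem IsTotallyUnimodular.exists_intCast_mem_intervalPolyhedron {M : Matrix ι κ ℤ}
    (hM : M.IsTotallyUnimodular) (hinj : Function.Injective (M.map ((↑) : ℤ → ℝ)).mulVec)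
    {lo hi : ι → ℤ} (hne : (M.intervalPolyhedron lo hi).Nonempty) :
    ∃ z : κ → ℤ, Int.cast ∘ z ∈ M.intervalPolyhedron lo hi := by
  classical
  obtain ⟨x, hx⟩ := (isCompact_intervalPolyhedron hinj lo hi).extremePoints_nonempty hne
  let T := M.tightRows lo hi x
  have hT : (M.submatrix ((↑) : T → ι) id).IsTotallyUnimodular := hM.submatrix _ _
  obtain ⟨z, rfl⟩ := hT.exists_intCast_eq_of_mulVec_injective (x := x)
    (fun a b hab => sub_eq_zero.mp <|
      eq_zero_of_mem_extremePoints_intervalPolyhedron hx fun i hi => by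
        rw [mulVec_sub, Pi.sub_apply, sub_eq_zero]
        exact congrFun hab ⟨i, hi⟩)
    fun i => i.2.elim (fun h => ⟨_, h⟩) (fun h => ⟨_, h⟩)
  exact ⟨z, hx.1⟩

theorem IsTotallyUnimodular.exists_int_between {M : Matrix ι κ ℤ} (hM : M.IsTotallyUnimodular)
    {lo hi : ι → ℤ} {a b : κ → ℤ} {x : κ → ℝ} (hax : Int.cast ∘ a ≤ x) (hxb : x ≤ Int.cast ∘ b)
    (hlo : Int.cast ∘ lo ≤ M.map ((↑) : ℤ → ℝ) *ᵥ x)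
    (hhi : M.map ((↑) : ℤ → ℝ) *ᵥ x ≤ Int.cast ∘ hi) :
    ∃ z : κ → ℤ, a ≤ z ∧ z ≤ b ∧ lo ≤ M *ᵥ z ∧ M *ᵥ z ≤ hi := by
  set N := fromRows M (1 : Matrix κ κ ℤ)
  have hN : N.map ((↑) : ℤ → ℝ) = fromRows (M.map (↑)) 1 := by
    rw [fromRows_map, Matrix.map_one _ Int.cast_zero Int.cast_one]
  have hmem : ∀ y, y ∈ N.intervalPolyhedron (Sum.elim lo a) (Sum.elim hi b) ↔
      (Int.cast ∘ lo ≤ M.map ((↑) : ℤ → ℝ) *ᵥ y ∧ Int.cast ∘ a ≤ y) ∧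
      (M.map ((↑) : ℤ → ℝ) *ᵥ y ≤ Int.cast ∘ hi ∧ y ≤ Int.cast ∘ b) := fun y => by
    simp [intervalPolyhedron, hN, fromRows_mulVec, Sum.comp_elim, Sum.elim_le_elim_iff]
  have hinj : Function.Injective (N.map ((↑) : ℤ → ℝ)).mulVec := fun y y' h => by
    simpa [hN, fromRows_mulVec] using congrArg (· ∘ Sum.inr) h
  obtain ⟨z, hz⟩ := hM.fromRows_one.exists_intCast_mem_intervalPolyhedron hinj
    ⟨x, (hmem x).mpr ⟨⟨hlo, hax⟩, hhi, hxb⟩⟩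
  rw [hmem, map_intCast_mulVec] at hz
  simp only [Pi.le_def, Function.comp_apply, Int.cast_le] at hz
  exact ⟨z, hz.1.2, hz.2.2, hz.1.1, hz.2.1⟩

end Matrix

theorem signVec_sub_sub {m : ℕ} {γ u v : Fin m → ℤ} {p q : Fin m → ℝ}
    (hγ : ∀ e, (γ e : ℝ) = p e + q e) (hu : ∀ e, ⌊p e⌋ ≤ u e ∧ u e ≤ ⌈p e⌉)
    (hv : ∀ e, ⌊q e⌋ ≤ v e ∧ v e ≤ ⌈q e⌉) : SignVec (γ - u - v) := by
  intro e
  have h₁ : ((⌊p e⌋ : ℤ) : ℝ) ≤ u e := Int.cast_le.mpr (hu e).1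
  have h₂ : (u e : ℝ) ≤ ⌈p e⌉ := Int.cast_le.mpr (hu e).2
  have h₃ : ((⌊q e⌋ : ℤ) : ℝ) ≤ v e := Int.cast_le.mpr (hv e).1
  have h₄ : (v e : ℝ) ≤ ⌈q e⌉ := Int.cast_le.mpr (hv e).2
  have hlt : ((γ e - u e - v e : ℤ) : ℝ) < 2 ∧ (-2 : ℝ) < (γ e - u e - v e : ℤ) := by
    push_cast
    constructor <;> linarith [hγ e, Int.sub_one_lt_floor (p e), Int.ceil_lt_add_one (p e),
      Int.sub_one_lt_floor (q e), Int.ceil_lt_add_one (q e)]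
  have h₅ : γ e - u e - v e < 2 := by exact_mod_cast hlt.1
  have h₆ : -2 < γ e - u e - v e := by exact_mod_cast hlt.2
  simp only [Pi.sub_apply]
  omega

theorem stmt13_general {r m : ℕ} (A : Matrix (Fin r) (Fin m) ℤ)
    (hTU : A.IsTotallyUnimodular)
    (γ : Fin m → ℤ) :
    ∃ γ₀ u v : Fin m → ℤ, SignVec γ₀ ∧ A.mulVec u = 0 ∧
      (∃ y : Fin r → ℤ, v = Matrix.vecMul y A) ∧ γ = γ₀ + u + v := by
  obtain ⟨y, hy⟩ := exists_mulVec_sub_transpose_mulVec_eq_zero (A.map ((↑) : ℤ → ℝ)) (Int.cast ∘ γ)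
  set q := (A.map ((↑) : ℤ → ℝ))ᵀ *ᵥ y
  set p := Int.cast ∘ γ - q
  obtain ⟨u, hpu, hup, hAu, hAu'⟩ := hTU.exists_int_between (lo := 0) (hi := 0) (x := p)
    (a := fun e => ⌊p e⌋) (b := fun e => ⌈p e⌉) (fun e => Int.floor_le _)
    (fun e => Int.le_ceil _) (by simp [hy]) (by simp [hy])
  obtain ⟨y₀, -, -, hqv, hvq⟩ := hTU.transpose.exists_int_between (x := y)
    (a := fun i => ⌊y i⌋) (b := fun i => ⌈y i⌉) (lo := fun e => ⌊q e⌋) (hi := fun e => ⌈q e⌉)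
    (fun i => Int.floor_le _) (fun i => Int.le_ceil _)
    (fun e => by simpa [transpose_map] using Int.floor_le (q e))
    (fun e => by simpa [transpose_map] using Int.le_ceil (q e))
  have hγ : ∀ e, (γ e : ℝ) = p e + q e := fun e => by simp [p]
  exact ⟨γ - u - Aᵀ *ᵥ y₀, u, Aᵀ *ᵥ y₀,
    signVec_sub_sub hγ (fun e => ⟨hpu e, hup e⟩) (fun e => ⟨hqv e, hvq e⟩),
    le_antisymm hAu' hAu, ⟨y₀, mulVec_transpose A y₀⟩, by abel⟩

/-- Every coset of `ℤ^E/(Λ_A + Λ*_A)` contains a representative with all coefficients in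
`{-1,0,1}`: every `γ ∈ ℤ^E` can be written `γ = γ₀ + u + v` with `γ₀` a `{-1,0,1}`-vector,
`u ∈ Λ_A = ker A ∩ ℤ^E` and `v ∈ Λ*_A = Aᵀℤ^r`. -/
theorem stmt13 {r m : ℕ} (A : Matrix (Fin r) (Fin m) ℤ)
    (hTU : A.IsTotallyUnimodular) (hrank : (A.map ((↑) : ℤ → ℝ)).rank = r)
    (γ : Fin m → ℤ) :
    ∃ γ₀ u v : Fin m → ℤ, SignVec γ₀ ∧ A.mulVec u = 0 ∧
      (∃ y : Fin r → ℤ, v = Matrix.vecMul y A) ∧ γ = γ₀ + u + v :=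
  stmt13_general A hTU γ
end
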